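/- arXiv:1612.07391 — 7 statements merged into one kernel-verified Lean document; each statement's English description precedes it below -/
import Mathlib

section
/- For every integer n ≥ 1, the sum over all marked permutations (π,M) of {1,…,n} of x^{asc(π)} (−1)^{|M|} equals the constant polynomial 1 in ℤ[x]. -/
/-!
Fix `π`. The admissible mark sets are exactly the subsets of the complement of the set of
left-to-right minimum values, so their alternating sum vanishes unless every value is a
left-to-right minimum, i.e. unless `π` is the decreasing permutation `n ⋯ 2 1`, which has no
ascents and contributes `x⁰ = 1`.
-/

open Finset

section Defs

variable {m : ℕ} {α : Type*}

def lrminFilter [LinearOrder α] (f : Fin m → α) : Finset (Fin m) :=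
  univ.filter fun i => ∀ j, j < i → f i < f j

def lrminCount [LinearOrder α] (f : Fin m → α) : ℕ :=
  (lrminFilter f).card

def lrminSet [LinearOrder α] [DecidableEq α] (f : Fin m → α) : Finset α :=
  (lrminFilter f).image f

def ascFilter [LinearOrder α] (f : Fin m → α) : Finset (Fin m) :=
  univ.filter fun i => ∃ j : Fin m, (j : ℕ) + 1 = (i : ℕ) ∧ f j < f i

def ascCount [LinearOrder α] (f : Fin m → α) : ℕ :=
  (ascFilter f).card

def ascSet [LinearOrder α] [DecidableEq α] (f : Fin m → α) : Finset α :=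
  (ascFilter f).image f

def apFilter [LinearOrder α] (f : Fin m → α) : Finset (Fin m) :=
  univ.filter fun i =>
    ∃ j k : Fin m, (j : ℕ) + 1 = (i : ℕ) ∧ (i : ℕ) + 1 = (k : ℕ) ∧ f j < f i ∧ f i = f k

def apCount [LinearOrder α] (f : Fin m → α) : ℕ := (apFilter f).card

def apSet [LinearOrder α] [DecidableEq α] (f : Fin m → α) : Finset α := (apFilter f).image f

def evenFilter [DecidableEq α] (f : Fin m → α) : Finset (Fin m) :=
  univ.filter fun p => (p : ℕ) % 2 = 1 ∧ ∀ q, q < p → f q ≠ f p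

def evenCount [DecidableEq α] (f : Fin m → α) : ℕ := (evenFilter f).card

def evenSet [DecidableEq α] (f : Fin m → α) : Finset α := (evenFilter f).image f

def desrlminCount [LinearOrder α] (f : Fin m → α) : ℕ :=
  (univ.filter fun i : Fin m =>
    (∃ j : Fin m, (j : ℕ) + 1 = (i : ℕ) ∧ f i < f j) ∨ ∀ j, i < j → f i < f j).card

def isLRminPos [LinearOrder α] (f : Fin m → α) (i : Fin m) : Prop :=
  ∀ j, j < i → f i < f j

instance [LinearOrder α] (f : Fin m → α) : DecidablePred (isLRminPos f) := fun i => by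
  unfold isLRminPos; infer_instance

def bk2Count [LinearOrder α] (f : Fin m → α) : ℕ :=
  (univ.filter fun i : Fin m =>
    isLRminPos f i ∧ (i : ℕ) + 1 < m ∧
      (∀ j : Fin m, (j : ℕ) = (i : ℕ) + 1 → ¬ isLRminPos f j) ∧
      (∀ j : Fin m, (j : ℕ) = (i : ℕ) + 2 → isLRminPos f j)).card

end Defs

def IsStirling (n : ℕ) (f : Fin (2 * n) → Fin n) : Prop :=
  (∀ k : Fin n, (univ.filter fun p => f p = k).card = 2) ∧
    ∀ p q r : Fin (2 * n), p < q → q < r → f p = f r → f p < f q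

instance (n : ℕ) : DecidablePred (IsStirling n) := fun f => by
  unfold IsStirling; infer_instance

def stirlingFinset (n : ℕ) : Finset (Fin (2 * n) → Fin n) :=
  univ.filter (IsStirling n)

def markedPerms (n : ℕ) : Finset (Equiv.Perm (Fin n) × Finset (Fin n)) :=
  univ.filter fun pm => ∀ v ∈ pm.2, v ∉ lrminSet (⇑pm.1)

variable {α : Type*}

theorem eq_revPerm_of_strictAnti {n : ℕ} {π : Equiv.Perm (Fin n)} (h : StrictAnti π) :
    π = Fin.revPerm := by
  have hid := (h.comp Fin.rev_strictAnti).eq_id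
  exact Equiv.ext fun i => by simpa using congrFun hid i.rev

theorem lrminFilter_eq_univ_iff [LinearOrder α] {m : ℕ} (f : Fin m → α) :
    lrminFilter f = univ ↔ StrictAnti f := by
  simpa [lrminFilter, eq_univ_iff_forall, StrictAnti] using forall_comm

theorem lrminSet_eq_univ_iff {n : ℕ} (π : Equiv.Perm (Fin n)) :
    lrminSet π = univ ↔ π = Fin.revPerm := by
  rw [lrminSet, ← image_univ_of_surjective π.surjective,
    (image_injective π.injective).eq_iff, lrminFilter_eq_univ_iff]
  exact ⟨eq_revPerm_of_strictAnti, fun h => h ▸ Fin.rev_strictAnti⟩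

theorem ascCount_eq_zero_of_strictAnti [LinearOrder α] {m : ℕ} {f : Fin m → α}
    (h : StrictAnti f) : ascCount f = 0 := by
  simp only [ascCount, ascFilter, card_eq_zero, filter_eq_empty_iff]
  rintro i - ⟨j, hji, hlt⟩
  exact (h (show j < i by omega)).not_gt hlt

theorem sum_neg_one_pow_card_avoiding {R : Type*} [Ring R] [Fintype α] [DecidableEq α]
    (S : Finset α) [DecidablePred fun M : Finset α => ∀ v ∈ M, v ∉ S] :
    ∑ M ∈ univ.filter (fun M : Finset α => ∀ v ∈ M, v ∉ S), (-1 : R) ^ #M =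
      if S = univ then 1 else 0 := by
  have hfilter : univ.filter (fun M : Finset α => ∀ v ∈ M, v ∉ S) = Sᶜ.powerset := by
    ext M
    simp [subset_iff]
  have := congrArg (Int.cast : ℤ → R) (sum_powerset_neg_one_pow_card (x := Sᶜ))
  push_cast [apply_ite (Int.cast : ℤ → R)] at this
  simp only [hfilter, this, compl_eq_empty_iff]

theorem stmt_2_general (n : ℕ) :
    ∑ pm ∈ markedPerms n,
        (Polynomial.X : Polynomial ℤ) ^ ascCount ⇑pm.1 * (-1) ^ pm.2.card = 1 := by
  rw [markedPerms, sum_filter, Fintype.sum_prod_type]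
  simp_rw [← sum_filter, ← mul_sum, sum_neg_one_pow_card_avoiding, lrminSet_eq_univ_iff,
    mul_ite, mul_one, mul_zero, sum_ite_eq', if_pos (mem_univ _)]
  rw [ascCount_eq_zero_of_strictAnti (f := ⇑Fin.revPerm) Fin.rev_strictAnti, pow_zero]

/-- sign-balance over marked permutations. -/
theorem stmt_2 (n : ℕ) (hn : 1 ≤ n) :
    ∑ pm ∈ markedPerms n,
        (Polynomial.X : Polynomial ℤ) ^ ascCount ⇑pm.1 * (-1) ^ pm.2.card = 1 :=
  stmt_2_general n
end

section
/- For every integer n ≥ 1, the sum over all Stirling permutations σ of order n of x^{ap(σ)} (−1)^{even(σ)} equals the constant polynomial 1 in ℤ[x]. -/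
open Finset

namespace SB

open Polynomial

/-! ### generic membership lemmas -/

lemma mem_apFilter_iff {m : ℕ} {α : Type*} [LinearOrder α] (f : Fin m → α) (i : Fin m) :
    i ∈ apFilter f ↔ ∃ (_ : 1 ≤ (i : ℕ)) (h2 : (i : ℕ) + 1 < m),
      f ⟨(i : ℕ) - 1, by omega⟩ < f i ∧ f i = f ⟨(i : ℕ) + 1, h2⟩ := by
  simp only [apFilter, mem_filter, mem_univ, true_and]
  constructor
  · rintro ⟨j, k, hj, hk, h1, h2⟩
    have h1le : 1 ≤ (i : ℕ) := by omega
    have hklt : (i : ℕ) + 1 < m := by have := k.isLt; omega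
    refine ⟨h1le, hklt, ?_, ?_⟩
    · have : j = (⟨(i : ℕ) - 1, by omega⟩ : Fin m) := by
        apply Fin.ext; simp; omega
      rwa [this] at h1
    · have : k = (⟨(i : ℕ) + 1, hklt⟩ : Fin m) := by
        apply Fin.ext; simp; omega
      rwa [this] at h2
  · rintro ⟨h1, h2, ha, hb⟩
    exact ⟨⟨(i : ℕ) - 1, by omega⟩, ⟨(i : ℕ) + 1, h2⟩, by simp; omega, by simp, ha, hb⟩

lemma mem_evenFilter_iff {m : ℕ} {α : Type*} [DecidableEq α] (f : Fin m → α) (p : Fin m) :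
    p ∈ evenFilter f ↔ (p : ℕ) % 2 = 1 ∧ ∀ q, q < p → f q ≠ f p := by
  simp [evenFilter]

variable {n : ℕ}

/-! ### insertion -/

def shiftF (p : ℕ) (i : Fin (2 * n)) : Fin (2 * (n + 1)) :=
  ⟨if (i : ℕ) < p then (i : ℕ) else (i : ℕ) + 2, by have := i.isLt; split <;> omega⟩

def ins (σ : Fin (2 * n) → Fin n) (p : ℕ) (i : Fin (2 * (n + 1))) : Fin (n + 1) :=
  if h : (i : ℕ) < p ∧ (i : ℕ) < 2 * n then (σ ⟨i, h.2⟩).castSucc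
  else if h2 : p + 2 ≤ (i : ℕ) then (σ ⟨(i : ℕ) - 2, by have := i.isLt; omega⟩).castSucc
  else Fin.last n

variable {σ : Fin (2 * n) → Fin n} {p : ℕ}

lemma ins_eval_lt (hp : p ≤ 2 * n) {i : Fin (2 * (n + 1))} (hi : (i : ℕ) < p) :
    ins σ p i = (σ ⟨i, by omega⟩).castSucc := by
  unfold ins
  rw [dif_pos ⟨hi, by omega⟩]

lemma ins_eval_mid {i : Fin (2 * (n + 1))} (h1 : p ≤ (i : ℕ)) (h2 : (i : ℕ) < p + 2) :
    ins σ p i = Fin.last n := by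
  unfold ins
  rw [dif_neg (by omega), dif_neg (by omega)]

lemma ins_eval_ge {i : Fin (2 * (n + 1))} (h : p + 2 ≤ (i : ℕ)) :
    ins σ p i = (σ ⟨(i : ℕ) - 2, by have := i.isLt; omega⟩).castSucc := by
  unfold ins
  rw [dif_neg (by omega), dif_pos h]

lemma shiftF_val (i : Fin (2 * n)) :
    (shiftF p i : ℕ) = if (i : ℕ) < p then (i : ℕ) else (i : ℕ) + 2 := rfl

lemma shiftF_ne (i : Fin (2 * n)) : (shiftF p i : ℕ) ≠ p ∧ (shiftF p i : ℕ) ≠ p + 1 := by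
  rw [shiftF_val]; split <;> omega

lemma ins_shiftF (hp : p ≤ 2 * n) (i : Fin (2 * n)) :
    ins σ p (shiftF p i) = (σ i).castSucc := by
  rcases lt_or_ge (i : ℕ) p with h | h
  · rw [ins_eval_lt hp (by rw [shiftF_val, if_pos h]; exact h)]
    congr 1; apply Fin.ext; simp [shiftF_val, h]
  · rw [ins_eval_ge (by rw [shiftF_val]; simp [not_lt.2 h]; omega)]
    congr 1; apply Fin.ext; simp [shiftF_val, not_lt.2 h]

lemma shiftF_lt_iff {i j : Fin (2 * n)} : shiftF p i < shiftF p j ↔ i < j := by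
  simp only [Fin.lt_def, shiftF_val]
  split <;> split <;> omega

lemma shiftF_injective : Function.Injective (shiftF (n := n) p) := by
  intro i j h
  have := congrArg Fin.val h
  simp only [shiftF_val] at this
  apply Fin.ext
  split at this <;> split at this <;> omega

lemma shiftF_surj (hp : p ≤ 2 * n) (j : Fin (2 * (n + 1)))
    (hj1 : (j : ℕ) ≠ p) (hj2 : (j : ℕ) ≠ p + 1) : ∃ i, shiftF p i = j := by
  rcases lt_or_ge (j : ℕ) p with h | h
  · exact ⟨⟨j, by omega⟩, Fin.ext (by simp [shiftF_val, h])⟩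
  · have hj : p + 2 ≤ (j : ℕ) := by omega
    have := j.isLt
    refine ⟨⟨(j : ℕ) - 2, by omega⟩, Fin.ext ?_⟩
    simp only [shiftF_val]
    rw [if_neg (by simp; omega)]
    omega

lemma ins_eq_last_iff (hp : p ≤ 2 * n) {i : Fin (2 * (n + 1))} :
    ins σ p i = Fin.last n ↔ (i : ℕ) = p ∨ (i : ℕ) = p + 1 := by
  constructor
  · intro h
    by_contra hc
    push_neg at hc
    rcases lt_or_ge (i : ℕ) p with h' | h'
    · rw [ins_eval_lt hp h'] at h
      exact absurd h (Fin.castSucc_lt_last _).ne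
    · rw [ins_eval_ge (by omega)] at h
      exact absurd h (Fin.castSucc_lt_last _).ne
  · intro h
    exact ins_eval_mid (by omega) (by omega)

/-! ### ins is Stirling -/

lemma filter_ins_last (hp : p ≤ 2 * n) :
    (univ.filter fun q => ins σ p q = Fin.last n) =
      {(⟨p, by omega⟩ : Fin (2 * (n + 1))), ⟨p + 1, by omega⟩} := by
  ext q
  simp only [mem_filter, mem_univ, true_and, mem_insert, mem_singleton,
    ins_eq_last_iff hp, Fin.ext_iff]

lemma filter_ins_castSucc (hp : p ≤ 2 * n) (k : Fin n) :
    (univ.filter fun q => ins σ p q = k.castSucc) =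
      (univ.filter fun q => σ q = k).image (shiftF p) := by
  ext j
  simp only [mem_filter, mem_univ, true_and, mem_image]
  constructor
  · intro h
    have hj1 : (j : ℕ) ≠ p := by
      intro hc
      rw [ins_eval_mid (le_of_eq hc.symm) (by omega)] at h
      exact absurd h.symm (Fin.castSucc_lt_last _).ne
    have hj2 : (j : ℕ) ≠ p + 1 := by
      intro hc
      rw [ins_eval_mid (by omega) (by omega)] at h
      exact absurd h.symm (Fin.castSucc_lt_last _).ne
    obtain ⟨i, hi⟩ := shiftF_surj hp j hj1 hj2
    refine ⟨i, ?_, hi⟩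
    have := ins_shiftF (σ := σ) hp i
    rw [hi, h] at this
    exact Fin.castSucc_injective _ this.symm
  · rintro ⟨i, hi, rfl⟩
    rw [ins_shiftF hp, hi]

lemma isStirling_ins (hp : p ≤ 2 * n) (hσ : IsStirling n σ) :
    IsStirling (n + 1) (ins σ p) := by
  constructor
  · intro k
    rcases eq_or_ne k (Fin.last n) with rfl | hk
    · rw [filter_ins_last hp, card_insert_of_notMem (by simp [Fin.ext_iff]),
        card_singleton]
    · obtain ⟨k', rfl⟩ := Fin.exists_castSucc_eq.2 hk
      rw [filter_ins_castSucc hp, card_image_of_injective _ shiftF_injective]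
      exact hσ.1 k'
  · intro a b c hab hbc heq
    rcases eq_or_ne (ins σ p a) (Fin.last n) with hl | hl
    · have ha := (ins_eq_last_iff hp).1 hl
      have hc := (ins_eq_last_iff hp).1 (heq ▸ hl)
      have := Fin.lt_def.1 hab
      have := Fin.lt_def.1 hbc
      omega
    · have hcl : ins σ p c ≠ Fin.last n := heq ▸ hl
      have ha' := (ins_eq_last_iff (σ := σ) hp (i := a)).not.1 hl
      have hc' := (ins_eq_last_iff (σ := σ) hp (i := c)).not.1 hcl
      push_neg at ha' hc'
      obtain ⟨a', rfl⟩ := shiftF_surj hp a ha'.1 ha'.2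
      obtain ⟨c', rfl⟩ := shiftF_surj hp c hc'.1 hc'.2
      rcases eq_or_ne (ins σ p b) (Fin.last n) with hbl | hbl
      · rw [hbl]
        exact lt_of_le_of_ne (Fin.le_last _) hl
      · have hb' := (ins_eq_last_iff (σ := σ) hp (i := b)).not.1 hbl
        push_neg at hb'
        obtain ⟨b', rfl⟩ := shiftF_surj hp b hb'.1 hb'.2
        simp only [ins_shiftF hp] at heq ⊢
        have := hσ.2 a' b' c' (shiftF_lt_iff.1 hab) (shiftF_lt_iff.1 hbc)
          (Fin.castSucc_injective _ heq)
        exact Fin.castSucc_lt_castSucc_iff.2 this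

end SB
namespace SB

open Polynomial

variable {n : ℕ}

/-! ### deletion -/

def Ppos (τ : Fin (2 * (n + 1)) → Fin (n + 1)) : ℕ :=
  if h : ∃ i, τ i = Fin.last n then
    (((univ : Finset (Fin (2 * (n + 1)))).filter fun i => τ i = Fin.last n).min'
      (by obtain ⟨i, hi⟩ := h; exact ⟨i, by simp [hi]⟩) : Fin (2 * (n + 1))).val
  else 0

def del (τ : Fin (2 * (n + 1)) → Fin (n + 1)) (i : Fin (2 * n)) : Fin n :=
  ⟨min ((τ (shiftF (Ppos τ) i)) : ℕ) (n - 1), by have := i.isLt; omega⟩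

variable {τ : Fin (2 * (n + 1)) → Fin (n + 1)}

/-- The key structure of the occurrences of the maximal letter. -/
lemma last_pair (hτ : IsStirling (n + 1) τ) :
    Ppos τ + 1 < 2 * (n + 1) ∧
      (∀ j : Fin (2 * (n + 1)), τ j = Fin.last n ↔ ((j : ℕ) = Ppos τ ∨ (j : ℕ) = Ppos τ + 1)) := by
  have hcard := hτ.1 (Fin.last n)
  obtain ⟨a, b, hab, hset⟩ := Finset.card_eq_two.1 hcard
  wlog hlt : a < b generalizing a b
  · exact this b a hab.symm (by rw [hset]; exact Finset.pair_comm a b) (by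
      rcases lt_or_gt_of_ne hab with h | h
      · exact absurd h hlt
      · exact h)
  have hmem : ∀ j : Fin (2 * (n + 1)), τ j = Fin.last n ↔ (j = a ∨ j = b) := by
    intro j
    have h1 : τ j = Fin.last n ↔ j ∈ ({a, b} : Finset (Fin (2 * (n + 1)))) := by
      rw [← hset]; simp
    rw [h1, Finset.mem_insert, Finset.mem_singleton]
  have hadj : (b : ℕ) = (a : ℕ) + 1 := by
    by_contra hc
    have hmid : (a : ℕ) + 1 < (b : ℕ) := by
      have := Fin.lt_def.1 hlt; omega
    have hlt2 : (a : ℕ) + 1 < 2 * (n + 1) := by have := b.isLt; omega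
    have := hτ.2 a ⟨(a : ℕ) + 1, hlt2⟩ b (by simp [Fin.lt_def]) (by simp [Fin.lt_def]; omega)
      (by rw [(hmem a).2 (Or.inl rfl), (hmem b).2 (Or.inr rfl)])
    rw [(hmem a).2 (Or.inl rfl)] at this
    exact absurd this (Fin.le_last _).not_gt
  have hP : Ppos τ = (a : ℕ) := by
    unfold Ppos
    rw [dif_pos ⟨a, (hmem a).2 (Or.inl rfl)⟩]
    congr 1
    apply le_antisymm
    · exact Finset.min'_le _ _ (by simp [(hmem a).2 (Or.inl rfl)])
    · apply Finset.le_min'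
      intro y hy
      simp only [mem_filter, mem_univ, true_and] at hy
      rcases (hmem y).1 hy with rfl | rfl
      · exact le_refl _
      · exact le_of_lt hlt
  constructor
  · rw [hP]; have := b.isLt; omega
  · intro j
    rw [hmem j, hP, Fin.ext_iff, Fin.ext_iff, hadj]

lemma Ppos_le (hτ : IsStirling (n + 1) τ) : Ppos τ ≤ 2 * n := by
  have := (last_pair hτ).1; omega

lemma del_castSucc (hτ : IsStirling (n + 1) τ) (i : Fin (2 * n)) :
    (del τ i).castSucc = τ (shiftF (Ppos τ) i) := by
  have hne := shiftF_ne (p := Ppos τ) i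
  have : τ (shiftF (Ppos τ) i) ≠ Fin.last n := by
    intro hcon
    rcases ((last_pair hτ).2 _).1 hcon with h' | h'
    · exact hne.1 h'
    · exact hne.2 h'
  have hval : ((τ (shiftF (Ppos τ) i)) : ℕ) < n := by
    rcases Fin.lt_or_eq_of_le (Fin.le_last (τ (shiftF (Ppos τ) i))) with h | h
    · simpa [Fin.lt_def] using h
    · exact absurd h this
  apply Fin.ext
  simp only [del, Fin.castSucc_mk, Fin.coe_castSucc]
  omega

lemma isStirling_del (hτ : IsStirling (n + 1) τ) : IsStirling n (del τ) := by
  set p := Ppos τ with hPdef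
  have hp : p ≤ 2 * n := Ppos_le hτ
  constructor
  · intro k
    have himg : ((univ.filter fun q => del τ q = k).image (shiftF p)) =
        univ.filter fun q => τ q = k.castSucc := by
      ext j
      simp only [mem_image, mem_filter, mem_univ, true_and]
      constructor
      · rintro ⟨i, hi, rfl⟩
        rw [← del_castSucc hτ, hi]
      · intro hj
        have hj1 : (j : ℕ) ≠ p := by
          intro hc
          have : τ j = Fin.last n := ((last_pair hτ).2 j).2 (Or.inl hc)
          rw [hj] at this
          exact (Fin.castSucc_lt_last _).ne this
        have hj2 : (j : ℕ) ≠ p + 1 := by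
          intro hc
          have : τ j = Fin.last n := ((last_pair hτ).2 j).2 (Or.inr hc)
          rw [hj] at this
          exact (Fin.castSucc_lt_last _).ne this
        obtain ⟨i, rfl⟩ := shiftF_surj hp j hj1 hj2
        refine ⟨i, ?_, rfl⟩
        rw [← del_castSucc hτ] at hj
        exact Fin.castSucc_injective _ hj
    have := hτ.1 k.castSucc
    rw [← himg, card_image_of_injective _ shiftF_injective] at this
    exact this
  · intro a b c hab hbc heq
    have heq' : τ (shiftF p a) = τ (shiftF p c) := by
      rw [← del_castSucc hτ, ← del_castSucc hτ, heq]
    have := hτ.2 (shiftF p a) (shiftF p b) (shiftF p c)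
      (shiftF_lt_iff.2 hab) (shiftF_lt_iff.2 hbc) heq'
    rw [← del_castSucc hτ, ← del_castSucc hτ] at this
    exact Fin.castSucc_lt_castSucc_iff.1 this

lemma ins_del (hτ : IsStirling (n + 1) τ) : ins (del τ) (Ppos τ) = τ := by
  have hp : Ppos τ ≤ 2 * n := Ppos_le hτ
  funext j
  rcases lt_or_ge (j : ℕ) (Ppos τ) with h | h
  · rw [ins_eval_lt hp h, del_castSucc hτ]
    congr 1
    apply Fin.ext
    simp [shiftF_val, h]
  · rcases lt_or_ge (j : ℕ) (Ppos τ + 2) with h2 | h2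
    · rw [ins_eval_mid h h2]
      symm
      rw [(last_pair hτ).2]
      omega
    · rw [ins_eval_ge h2, del_castSucc hτ]
      congr 1
      apply Fin.ext
      have := j.isLt
      simp only [shiftF_val]
      rw [if_neg (by simp; omega)]
      omega

lemma Ppos_ins (hp : p ≤ 2 * n) {σ : Fin (2 * n) → Fin n} : Ppos (ins σ p) = p := by
  unfold Ppos
  rw [dif_pos ⟨⟨p, by omega⟩, ins_eval_mid (by simp) (by simp)⟩]
  have hmem : (⟨p, by omega⟩ : Fin (2 * (n + 1))) ∈
      (univ.filter fun i => ins σ p i = Fin.last n) := by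
    simp only [mem_filter, mem_univ, true_and]
    exact ins_eval_mid (by simp) (by simp)
  apply le_antisymm
  · exact Fin.le_def.1 (Finset.min'_le _ _ hmem)
  · refine Fin.le_def.1 (Finset.le_min' _ _ (⟨p, by omega⟩ : Fin (2 * (n + 1))) ?_)
    intro y hy
    simp only [mem_filter, mem_univ, true_and, ins_eq_last_iff hp] at hy
    rw [Fin.le_def]
    simp only []
    omega

lemma del_ins (hp : p ≤ 2 * n) {σ : Fin (2 * n) → Fin n} (hσ : IsStirling n σ) :
    del (ins σ p) = σ := by
  funext i
  have h1 : (del (ins σ p) i).castSucc = ins σ p (shiftF (Ppos (ins σ p)) i) :=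
    del_castSucc (isStirling_ins hp hσ) i
  rw [Ppos_ins hp, ins_shiftF hp] at h1
  exact Fin.castSucc_injective _ h1

end SB
namespace SB

open Polynomial

variable {n : ℕ} {σ : Fin (2 * n) → Fin n} {p : ℕ}

lemma sigma_mk_eq {a b : ℕ} (ha : a < 2 * n) (hb : b < 2 * n) (h : a = b) :
    σ ⟨a, ha⟩ = σ ⟨b, hb⟩ := by subst h; rfl

lemma shiftF_parity (i : Fin (2 * n)) : (shiftF p i : ℕ) % 2 = (i : ℕ) % 2 := by
  rw [shiftF_val]; split <;> omega

lemma first_transfer (hp : p ≤ 2 * n) (i : Fin (2 * n)) :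
    (∀ r, r < shiftF p i → ins σ p r ≠ ins σ p (shiftF p i)) ↔
      (∀ r, r < i → σ r ≠ σ i) := by
  constructor
  · intro h r hr
    have := h (shiftF p r) (shiftF_lt_iff.2 hr)
    rw [ins_shiftF hp, ins_shiftF hp] at this
    exact fun hc => this (congrArg Fin.castSucc hc)
  · intro h r hr hcon
    have hlast : ins σ p r ≠ Fin.last n := by
      rw [hcon, ins_shiftF hp]; exact (Fin.castSucc_lt_last _).ne
    have hr1 : (r : ℕ) ≠ p := fun hc => hlast (ins_eval_mid (by omega) (by omega))
    have hr2 : (r : ℕ) ≠ p + 1 := fun hc => hlast (ins_eval_mid (by omega) (by omega))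
    obtain ⟨r', rfl⟩ := shiftF_surj hp r hr1 hr2
    rw [ins_shiftF hp, ins_shiftF hp] at hcon
    exact h r' (shiftF_lt_iff.1 hr) (Fin.castSucc_injective _ hcon)

lemma mem_evenFilter_ins (hp : p ≤ 2 * n) (q : Fin (2 * (n + 1))) :
    q ∈ evenFilter (ins σ p) ↔
      ((q : ℕ) = p ∧ p % 2 = 1) ∨ ∃ i ∈ evenFilter σ, shiftF p i = q := by
  have hq2 := q.isLt
  rw [mem_evenFilter_iff]
  constructor
  · rintro ⟨hpar, hfirst⟩
    by_cases hql : ins σ p q = Fin.last n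
    · rcases (ins_eq_last_iff hp).1 hql with h | h
      · exact Or.inl ⟨h, by omega⟩
      · exfalso
        have hplt : p < 2 * (n + 1) := by omega
        have : ins σ p ⟨p, hplt⟩ = Fin.last n := ins_eval_mid (by simp) (by simp)
        exact hfirst ⟨p, hplt⟩ (by rw [Fin.lt_def]; simp; omega) (by rw [this, hql])
    · have hq1 := (ins_eq_last_iff (σ := σ) hp (i := q)).not.1 hql
      push_neg at hq1
      obtain ⟨i, rfl⟩ := shiftF_surj hp q hq1.1 hq1.2
      refine Or.inr ⟨i, ?_, rfl⟩
      rw [mem_evenFilter_iff]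
      exact ⟨by rw [← shiftF_parity (p := p)]; exact hpar, (first_transfer hp i).1 hfirst⟩
  · rintro (⟨hq, hodd⟩ | ⟨i, hi, rfl⟩)
    · refine ⟨by omega, ?_⟩
      intro r hr hcon
      have hrp : (r : ℕ) < p := by rw [Fin.lt_def] at hr; omega
      rw [ins_eval_lt hp hrp, ins_eval_mid (by omega) (by omega)] at hcon
      exact (Fin.castSucc_lt_last _).ne hcon
    · rw [mem_evenFilter_iff] at hi
      exact ⟨by rw [shiftF_parity]; exact hi.1, (first_transfer hp i).2 hi.2⟩

lemma ins_mk_lt (hp : p ≤ 2 * n) {v : ℕ} (hv : v < 2 * (n + 1)) (h1 : v < p)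
    (h2 : v < 2 * n) : ins σ p ⟨v, hv⟩ = (σ ⟨v, h2⟩).castSucc :=
  ins_eval_lt hp h1

lemma ins_mk_mid {v : ℕ} (hv : v < 2 * (n + 1)) (h1 : p ≤ v) (h2 : v < p + 2) :
    ins σ p ⟨v, hv⟩ = Fin.last n :=
  ins_eval_mid h1 h2

lemma ins_mk_ge {v : ℕ} (hv : v < 2 * (n + 1)) (h1 : p + 2 ≤ v) (h2 : v - 2 < 2 * n) :
    ins σ p ⟨v, hv⟩ = (σ ⟨v - 2, h2⟩).castSucc :=
  ins_eval_ge h1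

lemma mem_apFilter_ins (hp : p ≤ 2 * n) (q : Fin (2 * (n + 1))) :
    q ∈ apFilter (ins σ p) ↔ ((q : ℕ) = p ∧ 1 ≤ p) ∨
      ∃ i ∈ apFilter σ, ((i : ℕ) ≠ p ∧ (i : ℕ) + 1 ≠ p) ∧ shiftF p i = q := by
  have hq2 := q.isLt
  rw [mem_apFilter_iff]
  constructor
  · rintro ⟨h1, h2, hasc, heq⟩
    by_cases hqp : (q : ℕ) = p
    · exact Or.inl ⟨hqp, by omega⟩
    · have hqp1 : (q : ℕ) ≠ p + 1 := by
        intro hc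
        have hfq : ins σ p q = Fin.last n := ins_eval_mid (by omega) (by omega)
        rw [hfq, ins_mk_ge (v := (q : ℕ) + 1) h2 (by omega) (by omega)] at heq
        exact (Fin.castSucc_lt_last _).ne heq.symm
      have hqp2 : (q : ℕ) ≠ p + 2 := by
        intro hc
        rw [ins_mk_mid (v := (q : ℕ) - 1) (by omega) (by omega) (by omega)] at hasc
        exact absurd hasc (Fin.le_last _).not_gt
      obtain ⟨i, rfl⟩ := shiftF_surj hp q hqp hqp1
      have hi2 := i.isLt
      rcases lt_or_ge (i : ℕ) p with hilt | hige
      · -- prefix case : value of shiftF p i is i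
        have hqv : (shiftF p i : ℕ) = (i : ℕ) := by rw [shiftF_val, if_pos hilt]
        have hip1 : (i : ℕ) + 1 ≠ p := by
          intro hc
          rw [ins_shiftF hp, ins_mk_mid (v := (shiftF p i : ℕ) + 1) h2 (by omega) (by omega)] at heq
          exact (Fin.castSucc_lt_last _).ne heq
        refine Or.inr ⟨i, ?_, ⟨by omega, hip1⟩, rfl⟩
        rw [mem_apFilter_iff]
        rw [ins_shiftF hp, ins_mk_lt (v := (shiftF p i : ℕ) - 1) hp (by omega) (by omega)
          (by omega), Fin.castSucc_lt_castSucc_iff] at hasc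
        rw [ins_shiftF hp, ins_mk_lt (v := (shiftF p i : ℕ) + 1) hp (by omega) (by omega)
          (by omega), Fin.castSucc_inj] at heq
        refine ⟨by omega, by omega, (sigma_mk_eq _ _ (by omega)).trans_lt hasc, ?_⟩
        exact heq.trans (sigma_mk_eq _ _ (by omega))
      · -- suffix case : value of shiftF p i is i + 2
        have hqv : (shiftF p i : ℕ) = (i : ℕ) + 2 := by
          rw [shiftF_val, if_neg (by omega)]
        have hge : p + 1 ≤ (i : ℕ) := by omega
        refine Or.inr ⟨i, ?_, ⟨by omega, by omega⟩, rfl⟩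
        rw [mem_apFilter_iff]
        rw [ins_shiftF hp, ins_mk_ge (v := (shiftF p i : ℕ) - 1) (by omega) (by omega)
          (by omega), Fin.castSucc_lt_castSucc_iff] at hasc
        rw [ins_shiftF hp, ins_mk_ge (v := (shiftF p i : ℕ) + 1) (by omega) (by omega)
          (by omega), Fin.castSucc_inj] at heq
        refine ⟨by omega, by omega, (sigma_mk_eq _ _ (by omega)).trans_lt hasc, ?_⟩
        exact heq.trans (sigma_mk_eq _ _ (by omega))
  · rintro (⟨hq, hp1⟩ | ⟨i, hi, ⟨hne1, hne2⟩, rfl⟩)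
    · refine ⟨by omega, by omega, ?_, ?_⟩
      · rw [ins_mk_lt (v := (q : ℕ) - 1) hp (by omega) (by omega) (by omega),
          ins_eval_mid (by omega) (by omega)]
        exact Fin.castSucc_lt_last _
      · rw [ins_eval_mid (by omega) (by omega),
          ins_mk_mid (v := (q : ℕ) + 1) (by omega) (by omega) (by omega)]
    · rw [mem_apFilter_iff] at hi
      obtain ⟨hi1, hi1', hiasc, hieq⟩ := hi
      have hi2 := i.isLt
      rcases lt_or_ge (i : ℕ) p with hilt | hige
      · have hqv : (shiftF p i : ℕ) = (i : ℕ) := by rw [shiftF_val, if_pos hilt]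
        have hip1 : (i : ℕ) + 1 < p := by omega
        refine ⟨by omega, by omega, ?_, ?_⟩
        · rw [ins_shiftF hp, ins_mk_lt (v := (shiftF p i : ℕ) - 1) hp (by omega) (by omega)
            (by omega), Fin.castSucc_lt_castSucc_iff]
          exact (sigma_mk_eq _ _ (by omega)).trans_lt hiasc
        · rw [ins_shiftF hp, ins_mk_lt (v := (shiftF p i : ℕ) + 1) hp (by omega) (by omega)
            (by omega), Fin.castSucc_inj]
          exact hieq.trans (sigma_mk_eq _ _ (by omega))
      · have hqv : (shiftF p i : ℕ) = (i : ℕ) + 2 := by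
          rw [shiftF_val, if_neg (by omega)]
        have hge : p + 1 ≤ (i : ℕ) := by omega
        refine ⟨by omega, by omega, ?_, ?_⟩
        · rw [ins_shiftF hp, ins_mk_ge (v := (shiftF p i : ℕ) - 1) (by omega) (by omega)
            (by omega), Fin.castSucc_lt_castSucc_iff]
          exact (sigma_mk_eq _ _ (by omega)).trans_lt hiasc
        · rw [ins_shiftF hp, ins_mk_ge (v := (shiftF p i : ℕ) + 1) (by omega) (by omega)
            (by omega), Fin.castSucc_inj]
          exact hieq.trans (sigma_mk_eq _ _ (by omega))

end SB
namespace SB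

open Polynomial

variable {n : ℕ} {σ : Fin (2 * n) → Fin n} {p : ℕ}

lemma evenFilter_ins_eq (hp : p ≤ 2 * n) :
    evenFilter (ins σ p) = (evenFilter σ).image (shiftF p) ∪
      (if p % 2 = 1 then {(⟨p, by omega⟩ : Fin (2 * (n + 1)))} else ∅) := by
  ext q
  rw [mem_evenFilter_ins hp]
  simp only [mem_union, mem_image]
  constructor
  · rintro (⟨h1, h2⟩ | ⟨i, hi, rfl⟩)
    · right; rw [if_pos h2]; simp [Fin.ext_iff, h1]
    · exact Or.inl ⟨i, hi, rfl⟩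
  · rintro (⟨i, hi, rfl⟩ | h)
    · exact Or.inr ⟨i, hi, rfl⟩
    · left
      split at h
      · simp only [mem_singleton] at h
        subst h
        exact ⟨rfl, by assumption⟩
      · simp at h

lemma evenCount_ins (hp : p ≤ 2 * n) :
    evenCount (ins σ p) = evenCount σ + p % 2 := by
  have hdisj : Disjoint ((evenFilter σ).image (shiftF p))
      (if p % 2 = 1 then {(⟨p, by omega⟩ : Fin (2 * (n + 1)))} else ∅) := by
    split
    · rw [Finset.disjoint_singleton_right, mem_image]
      rintro ⟨i, hi, heq⟩
      have hv : (shiftF p i : ℕ) = p := by rw [heq]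
      exact (shiftF_ne i).1 hv
    · exact Finset.disjoint_empty_right _
  rw [evenCount, evenFilter_ins_eq hp, card_union_of_disjoint hdisj,
    card_image_of_injective _ shiftF_injective]
  congr 1
  rcases Nat.mod_two_eq_zero_or_one p with h | h <;> simp [h]

lemma apFilter_ins_eq (hp : p ≤ 2 * n) :
    apFilter (ins σ p) =
      ((apFilter σ).filter fun i : Fin (2 * n) => (i : ℕ) ≠ p ∧ (i : ℕ) + 1 ≠ p).image (shiftF p) ∪
        (if 1 ≤ p then {(⟨p, by omega⟩ : Fin (2 * (n + 1)))} else ∅) := by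
  ext q
  rw [mem_apFilter_ins hp]
  simp only [mem_union, mem_image, mem_filter]
  constructor
  · rintro (⟨h1, h2⟩ | ⟨i, hi, hcond, rfl⟩)
    · right; rw [if_pos h2]; simp [Fin.ext_iff, h1]
    · exact Or.inl ⟨i, ⟨hi, hcond⟩, rfl⟩
  · rintro (⟨i, ⟨hi, hcond⟩, rfl⟩ | h)
    · exact Or.inr ⟨i, hi, hcond, rfl⟩
    · left
      split at h
      · simp only [mem_singleton] at h
        subst h
        exact ⟨rfl, by assumption⟩
      · simp at h

lemma ap_mem_bounds {i : Fin (2 * n)} (h : i ∈ apFilter σ) :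
    1 ≤ (i : ℕ) ∧ (i : ℕ) + 1 < 2 * n := by
  rw [mem_apFilter_iff] at h
  obtain ⟨a, b, -⟩ := h
  exact ⟨a, b⟩

lemma ap_spacing (hc : ∀ k : Fin n, (univ.filter fun q => σ q = k).card = 2)
    {i j : Fin (2 * n)} (hi : i ∈ apFilter σ) (hj : j ∈ apFilter σ)
    (hij : (i : ℕ) < (j : ℕ)) : (i : ℕ) + 2 ≤ (j : ℕ) := by
  by_contra hcon
  rw [mem_apFilter_iff] at hi hj
  obtain ⟨hi1, hi2, -, hieq⟩ := hi
  obtain ⟨hj1, hj2, -, hjeq⟩ := hj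
  have hj_eq : j = (⟨(i : ℕ) + 1, hi2⟩ : Fin (2 * n)) := Fin.ext (by simp; omega)
  have e1 : σ ⟨(i : ℕ) + 1, hi2⟩ = σ i := hieq.symm
  have e2 : σ ⟨(j : ℕ) + 1, hj2⟩ = σ i := by rw [← hjeq, hj_eq, e1]
  have hsub : ({i, ⟨(i : ℕ) + 1, hi2⟩, ⟨(j : ℕ) + 1, hj2⟩} : Finset (Fin (2 * n))) ⊆
      univ.filter fun q => σ q = σ i := by
    intro x hx
    simp only [mem_insert, mem_singleton] at hx
    rcases hx with rfl | rfl | rfl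
    · simp
    · simp [e1]
    · simp [e2]
  have h3 : ({i, ⟨(i : ℕ) + 1, hi2⟩, ⟨(j : ℕ) + 1, hj2⟩} : Finset (Fin (2 * n))).card = 3 := by
    rw [card_insert_of_notMem (by simp [Fin.ext_iff]; omega),
      card_insert_of_notMem (by simp [Fin.ext_iff]; omega), card_singleton]
  have hle := card_le_card hsub
  rw [h3, hc (σ i)] at hle
  omega

def Dset (σ : Fin (2 * n) → Fin n) : Finset ℕ :=
  (apFilter σ).biUnion fun i => {(i : ℕ), (i : ℕ) + 1}

lemma mem_Dset {x : ℕ} : x ∈ Dset σ ↔ ∃ i ∈ apFilter σ, x = (i : ℕ) ∨ x = (i : ℕ) + 1 := by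
  simp [Dset]

lemma apCount_ins (hp : p ≤ 2 * n) (hσ : IsStirling n σ) :
    apCount (ins σ p) = if p = 0 ∨ p ∈ Dset σ then apCount σ else apCount σ + 1 := by
  have hdisj : Disjoint
      (((apFilter σ).filter fun i : Fin (2 * n) => (i : ℕ) ≠ p ∧ (i : ℕ) + 1 ≠ p).image (shiftF p))
      (if 1 ≤ p then {(⟨p, by omega⟩ : Fin (2 * (n + 1)))} else ∅) := by
    split
    · rw [Finset.disjoint_singleton_right, mem_image]
      rintro ⟨i, hi, heq⟩
      have hv : (shiftF p i : ℕ) = p := by rw [heq]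
      exact (shiftF_ne i).1 hv
    · exact Finset.disjoint_empty_right _
  rw [apCount, apFilter_ins_eq hp, card_union_of_disjoint hdisj,
    card_image_of_injective _ shiftF_injective]
  by_cases h0 : p = 0
  · subst h0
    rw [if_pos (Or.inl rfl), if_neg (by omega)]
    have hA : ((apFilter σ).filter fun i : Fin (2 * n) => (i : ℕ) ≠ 0 ∧ (i : ℕ) + 1 ≠ 0) = apFilter σ :=
      filter_true_of_mem fun i hi => ⟨by have := (ap_mem_bounds hi).1; omega, by omega⟩
    rw [hA, card_empty]
    rfl
  · by_cases hD : p ∈ Dset σ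
    · rw [if_pos (Or.inr hD), if_pos (by omega)]
      obtain ⟨i0, hi0, hx⟩ := mem_Dset.1 hD
      have hA : ((apFilter σ).filter fun i : Fin (2 * n) => (i : ℕ) ≠ p ∧ (i : ℕ) + 1 ≠ p) =
          (apFilter σ).erase i0 := by
        ext x
        simp only [mem_filter, mem_erase]
        constructor
        · rintro ⟨hxA, hx1, hx2⟩
          refine ⟨fun hcon => ?_, hxA⟩
          subst hcon
          omega
        · rintro ⟨hne, hxA⟩
          have hnev : (x : ℕ) ≠ (i0 : ℕ) := fun hc => hne (Fin.ext hc)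
          refine ⟨hxA, ?_, ?_⟩
          · intro hc
            rcases hx with h | h
            · omega
            · have : (i0 : ℕ) < (x : ℕ) := by omega
              have := ap_spacing hσ.1 hi0 hxA this
              omega
          · intro hc
            rcases hx with h | h
            · have : (x : ℕ) < (i0 : ℕ) := by omega
              have := ap_spacing hσ.1 hxA hi0 this
              omega
            · omega
      rw [hA, card_erase_of_mem hi0, card_singleton]
      have : 0 < (apFilter σ).card := card_pos.2 ⟨i0, hi0⟩
      unfold apCount
      omega
    · have hcond : ¬(p = 0 ∨ p ∈ Dset σ) := by rintro (h | h); exacts [h0 h, hD h]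
      rw [if_neg hcond, if_pos (show 1 ≤ p by omega)]
      have hA : ((apFilter σ).filter fun i : Fin (2 * n) => (i : ℕ) ≠ p ∧ (i : ℕ) + 1 ≠ p) = apFilter σ := by
        apply filter_true_of_mem
        intro i hi
        constructor
        · intro hc
          exact hD (mem_Dset.2 ⟨i, hi, Or.inl hc.symm⟩)
        · intro hc
          exact hD (mem_Dset.2 ⟨i, hi, Or.inr hc.symm⟩)
      rw [hA, card_singleton]
      rfl

end SB
namespace SB

open Polynomial

variable {n : ℕ} {σ : Fin (2 * n) → Fin n} {p : ℕ}

lemma Dset_subset : Dset σ ⊆ Finset.Ico 1 (2 * n + 1) := by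
  intro x hx
  rw [mem_Dset] at hx
  obtain ⟨i, hi, h⟩ := hx
  have := ap_mem_bounds hi
  rw [Finset.mem_Ico]
  omega

lemma Dsum (hc : ∀ k : Fin n, (univ.filter fun q => σ q = k).card = 2) :
    ∑ x ∈ Dset σ, ((-1 : Polynomial ℤ)) ^ x = 0 := by
  rw [Dset, sum_biUnion]
  · apply sum_eq_zero
    intro i _
    rw [sum_pair (by omega)]
    rw [pow_succ]
    ring
  · intro a ha b hb hab
    have hav : (a : ℕ) ≠ (b : ℕ) := fun hc' => hab (Fin.ext hc')
    simp only [Function.onFun]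
    rw [Finset.disjoint_left]
    intro x hx1 hx2
    simp only [mem_insert, mem_singleton] at hx1 hx2
    have hmema : a ∈ apFilter σ := by simpa using ha
    have hmemb : b ∈ apFilter σ := by simpa using hb
    rcases lt_or_gt_of_ne hav with h | h
    · have := ap_spacing hc hmema hmemb h
      omega
    · have := ap_spacing hc hmemb hmema h
      omega

lemma scalar_sum (hc : ∀ k : Fin n, (univ.filter fun q => σ q = k).card = 2) :
    ∑ p ∈ range (2 * n + 1),
      ((if p = 0 ∨ p ∈ Dset σ then (1 : Polynomial ℤ) else X) * (-1) ^ p) = 1 := by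
  have h0 : (0 : ℕ) ∈ range (2 * n + 1) := by simp
  rw [← Finset.add_sum_erase _ _ h0]
  rw [if_pos (Or.inl rfl), pow_zero, mul_one]
  have herase : (range (2 * n + 1)).erase 0 = Finset.Ico 1 (2 * n + 1) := by
    ext x; simp [Finset.mem_Ico]; omega
  rw [herase]
  have hIco : ∑ p ∈ Finset.Ico 1 (2 * n + 1), ((-1 : Polynomial ℤ)) ^ p = 0 := by
    have htot : ∑ p ∈ range (2 * n + 1), ((-1 : Polynomial ℤ)) ^ p = 1 := by
      rw [neg_one_geom_sum, if_neg (by simp [Nat.even_add_one, parity_simps])]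
    rw [← Finset.add_sum_erase _ _ h0, herase, pow_zero] at htot
    linear_combination htot
  rw [← Finset.sum_filter_add_sum_filter_not (Finset.Ico 1 (2 * n + 1))
    (fun p => p ∈ Dset σ)]
  have hfil : (Finset.Ico 1 (2 * n + 1)).filter (fun p => p ∈ Dset σ) = Dset σ := by
    ext x
    simp only [mem_filter]
    exact ⟨fun h => h.2, fun h => ⟨Dset_subset h, h⟩⟩
  have t1 : ∑ p ∈ (Finset.Ico 1 (2 * n + 1)).filter (fun p => p ∈ Dset σ),
      ((if p = 0 ∨ p ∈ Dset σ then (1 : Polynomial ℤ) else X) * (-1) ^ p) = 0 := by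
    rw [hfil]
    rw [sum_congr rfl (fun p hp => by rw [if_pos (Or.inr hp), one_mul])]
    exact Dsum hc
  have t2 : ∑ p ∈ (Finset.Ico 1 (2 * n + 1)).filter (fun p => ¬ p ∈ Dset σ),
      ((if p = 0 ∨ p ∈ Dset σ then (1 : Polynomial ℤ) else X) * (-1) ^ p) = 0 := by
    have hc2 : ∀ p ∈ (Finset.Ico 1 (2 * n + 1)).filter (fun p => ¬ p ∈ Dset σ),
        ((if p = 0 ∨ p ∈ Dset σ then (1 : Polynomial ℤ) else X) * (-1) ^ p)
          = X * (-1) ^ p := by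
      intro p hp
      rw [mem_filter, Finset.mem_Ico] at hp
      rw [if_neg (by rintro (h | h); exacts [by omega, hp.2 h])]
    rw [sum_congr rfl hc2, ← mul_sum]
    have : ∑ p ∈ (Finset.Ico 1 (2 * n + 1)).filter (fun p => ¬ p ∈ Dset σ),
        ((-1 : Polynomial ℤ)) ^ p = 0 := by
      have := Finset.sum_filter_add_sum_filter_not (Finset.Ico 1 (2 * n + 1))
        (fun p => p ∈ Dset σ) (fun p => ((-1 : Polynomial ℤ)) ^ p)
      rw [hIco, hfil, Dsum hc] at this
      linear_combination this
    rw [this, mul_zero]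
  rw [t1, t2]
  ring

lemma inner_sum (hσ : IsStirling n σ) :
    ∑ p ∈ range (2 * n + 1),
        (X : Polynomial ℤ) ^ apCount (ins σ p) * (-1) ^ evenCount (ins σ p)
      = (X : Polynomial ℤ) ^ apCount σ * (-1) ^ evenCount σ := by
  have key : ∀ p ∈ range (2 * n + 1),
      (X : Polynomial ℤ) ^ apCount (ins σ p) * (-1) ^ evenCount (ins σ p)
        = (X : Polynomial ℤ) ^ apCount σ * (-1) ^ evenCount σ *
          ((if p = 0 ∨ p ∈ Dset σ then (1 : Polynomial ℤ) else X) * (-1) ^ p) := by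
    intro p hp
    rw [mem_range] at hp
    rw [apCount_ins (by omega) hσ, evenCount_ins (by omega)]
    have hpar : ((-1 : Polynomial ℤ)) ^ (p % 2) = (-1) ^ p := by
      conv_rhs => rw [← Nat.div_add_mod p 2, pow_add, pow_mul]
      simp
    rw [pow_add, hpar]
    split
    · ring
    · ring
  rw [sum_congr rfl key, ← mul_sum, scalar_sum hσ.1, mul_one]

lemma key_sum : ∀ m : ℕ, ∑ σ ∈ stirlingFinset m,
    (X : Polynomial ℤ) ^ apCount σ * (-1) ^ evenCount σ = 1 := by
  intro m
  induction m with
  | zero =>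
    have huniv : stirlingFinset 0 = {(fun i => i.elim0 : Fin (2 * 0) → Fin 0)} := by
      apply Finset.eq_singleton_iff_unique_mem.2
      constructor
      · rw [stirlingFinset, mem_filter]
        exact ⟨mem_univ _, fun k => k.elim0, fun p q r _ _ _ => p.elim0⟩
      · intro g _
        funext i
        exact i.elim0
    rw [huniv, sum_singleton]
    have h1 : apFilter (fun i => i.elim0 : Fin (2 * 0) → Fin 0) = ∅ :=
      Finset.eq_empty_of_forall_notMem fun i _ => i.elim0
    have h2 : evenFilter (fun i => i.elim0 : Fin (2 * 0) → Fin 0) = ∅ :=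
      Finset.eq_empty_of_forall_notMem fun i _ => i.elim0
    rw [apCount, evenCount, h1, h2, card_empty, pow_zero, pow_zero, mul_one]
  | succ n ih =>
    have hstep : ∑ σ ∈ stirlingFinset (n + 1),
        (X : Polynomial ℤ) ^ apCount σ * (-1) ^ evenCount σ
        = ∑ x ∈ (stirlingFinset n) ×ˢ (range (2 * n + 1)),
            (X : Polynomial ℤ) ^ apCount (ins x.1 x.2) * (-1) ^ evenCount (ins x.1 x.2) := by
      apply Finset.sum_nbij' (fun τ => (del τ, Ppos τ)) (fun x => ins x.1 x.2)
      · intro τ hτ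
        rw [stirlingFinset, mem_filter] at hτ
        rw [Finset.mem_product, mem_range]
        constructor
        · rw [stirlingFinset, mem_filter]
          exact ⟨mem_univ _, isStirling_del hτ.2⟩
        · have := Ppos_le hτ.2
          omega
      · intro x hx
        rw [Finset.mem_product, mem_range, stirlingFinset, mem_filter] at hx
        rw [stirlingFinset, mem_filter]
        exact ⟨mem_univ _, isStirling_ins (by omega) hx.1.2⟩
      · intro τ hτ
        rw [stirlingFinset, mem_filter] at hτ
        exact ins_del hτ.2
      · intro x hx
        rw [Finset.mem_product, mem_range, stirlingFinset, mem_filter] at hx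
        have hp : x.2 ≤ 2 * n := by omega
        rw [del_ins hp hx.1.2, Ppos_ins hp]
      · intro τ hτ
        rw [stirlingFinset, mem_filter] at hτ
        rw [ins_del hτ.2]
    rw [hstep, Finset.sum_product]
    rw [sum_congr rfl (fun σ hσ => ?_)]
    · exact ih
    · rw [stirlingFinset, mem_filter] at hσ
      exact inner_sum hσ.2

end SB

/-- sign-balance over Stirling permutations. -/
theorem stmt_3 (n : ℕ) (hn : 1 ≤ n) :
    ∑ σ ∈ stirlingFinset n,
        (Polynomial.X : Polynomial ℤ) ^ apCount σ * (-1) ^ evenCount σ = 1 := by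
  exact SB.key_sum n
end

section
/- For every integer n ≥ 1, the following identity holds in ℤ[p,q]: the sum over all Stirling permutations σ of order n of p^{odd(σ)} q^{even(σ)} equals Σ_{k=0}^{n} c(n,k) p^k (p+q)^{n−k}, where c(n,k) is the signless Stirling number of the first kind. -/
open Finset

/-- The number of cycles of a permutation, fixed points counting as cycles. -/
def cycCount {n : ℕ} (π : Equiv.Perm (Fin n)) : ℕ :=
  Multiset.card π.cycleType + (univ.filter fun i => π i = i).card

/-- The signless Stirling number of the first kind: the number of permutations of
{1,…,n} with exactly k cycles. -/
def stirlingFirst (n k : ℕ) : ℕ :=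
  (univ.filter fun π : Equiv.Perm (Fin n) => cycCount π = k).card

/-!
Both sides equal `∏_{j<n} (p + j (p + q))`. Every Stirling permutation of order `n + 1` arises
in exactly one way by inserting the adjacent pair of its largest letter into one of the `2n + 1`
gaps of a Stirling permutation of order `n`; the first copy of the new letter lands at an even
position for `n` of the gaps and at an odd one for the other `n + 1`, which contributes the factor
`(n + 1) p + n q`. On the other side, writing a permutation of `Fin (n + 1)` as `swap 0 p`
composed with a permutation fixing `0` adds a cycle exactly when `p = 0`, so
`∑_π p ^ cyc π (p + q) ^ (n - cyc π)` picks up the factor `p + n (p + q)`.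
-/

theorem pow_add_ite_mul_pow_sub {M : Type*} [CommMonoid M] (x y : M) {k n : ℕ} (hk : k ≤ n)
    (P : Prop) [Decidable P] :
    x ^ (k + if P then 1 else 0) * y ^ (n + 1 - (k + if P then 1 else 0))
      = (if P then x else y) * (x ^ k * y ^ (n - k)) := by
  split_ifs
  · rw [Nat.add_sub_add_right, pow_succ]; ac_rfl
  · rw [add_zero, Nat.sub_add_comm hk, pow_succ]; ac_rfl

namespace Equiv.Perm

variable {α : Type*} [Fintype α] [DecidableEq α]

/-- Agrees with `cycCount` on `Perm (Fin n)` definitionally. -/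
def numCycles (σ : Perm α) : ℕ :=
  Multiset.card σ.cycleType + #(univ.filter fun x => σ x = x)

theorem numCycles_eq_card_cycleType_add (σ : Perm α) :
    σ.numCycles = Multiset.card σ.cycleType + (Fintype.card α - #σ.support) := by
  have : (univ.filter fun x => σ x = x) = σ.supportᶜ := by ext; simp
  rw [numCycles, this, card_compl]

theorem numCycles_le (σ : Perm α) : σ.numCycles ≤ Fintype.card α := by
  have hcard : Multiset.card σ.cycleType ≤ #σ.support := by
    rw [← sum_cycleType]
    simpa using Multiset.card_nsmul_le_sum fun _ h => (one_lt_of_mem_cycleType h).le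
  rw [numCycles_eq_card_cycleType_add]
  have := card_le_univ σ.support
  omega

theorem numCycles_one : (1 : Perm α).numCycles = Fintype.card α := by
  simp [numCycles_eq_card_cycleType_add]

theorem IsCycle.numCycles_add_card_support {c : Perm α} (hc : c.IsCycle) :
    c.numCycles + #c.support = Fintype.card α + 1 := by
  rw [numCycles_eq_card_cycleType_add, hc.cycleType, Multiset.card_singleton]
  have := card_le_univ c.support
  omega

theorem Disjoint.numCycles_mul {f g : Perm α} (h : f.Disjoint g) :
    (f * g).numCycles + Fintype.card α = f.numCycles + g.numCycles := by
  have hsupp := disjoint_iff_disjoint_support.1 h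
  have hle : #f.support + #g.support ≤ Fintype.card α := by
    rw [← card_union_of_disjoint hsupp]; exact card_le_univ _
  simp only [numCycles_eq_card_cycleType_add, h.cycleType_mul, h.support_mul,
    card_union_of_disjoint hsupp, Multiset.card_add]
  omega

theorem IsCycle.numCycles_swap_mul {c : Perm α} (hc : c.IsCycle) {x : α} (hx : c x ≠ x) :
    (swap x (c x) * c).numCycles = c.numCycles + 1 := by
  have hcard := hc.numCycles_add_card_support
  by_cases hcx : c (c x) = x
  · have hswap : c = swap x (c x) := hc.eq_swap_of_apply_apply_eq_self hx hcx
    have hsupp : #c.support = 2 := by rw [hswap]; exact card_support_swap hx.symm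
    have hone : swap x (c x) * c = 1 := by nth_rw 2 [hswap]; exact swap_mul_self _ _
    rw [hone, numCycles_one]
    omega
  · have hx' : x ∈ c.support := mem_support.2 hx
    have hcard' := (hc.swap_mul hx hcx).numCycles_add_card_support
    rw [support_swap_mul_eq c x hcx, card_sdiff_of_subset (singleton_subset_iff.2 hx'),
      card_singleton] at hcard'
    have := card_pos.2 ⟨x, hx'⟩
    omega

/-- `swap x (σ x) * σ` fixes `x` and otherwise follows `σ`: it cuts `x` out of its cycle. -/
theorem numCycles_swap_mul {σ : Perm α} {x : α} (hx : σ x ≠ x) :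
    (swap x (σ x) * σ).numCycles = σ.numCycles + 1 := by
  set c := σ.cycleOf x
  set d := σ * c⁻¹
  have hc : c.IsCycle := isCycle_cycleOf σ hx
  have hcx : c x = σ x := cycleOf_apply_self σ x
  have hdc : d.Disjoint c := disjoint_mul_inv_of_mem_cycleFactorsFinset
    (cycleOf_mem_cycleFactorsFinset_iff.2 (mem_support.2 hx))
  have hσ : σ = d * c := by simp [d]
  have hswap : (swap x (σ x)).support ≤ c.support := by
    intro y hy
    rw [support_swap (Ne.symm hx), mem_insert, mem_singleton] at hy
    rw [mem_support_cycleOf_iff]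
    rcases hy with rfl | rfl
    · exact ⟨SameCycle.refl _ _, mem_support.2 hx⟩
    · exact ⟨(SameCycle.refl _ _).apply_right, mem_support.2 hx⟩
  have hτ : swap x (σ x) * σ = d * (swap x (c x) * c) := by
    rw [hcx]
    generalize σ x = y at hswap ⊢
    rw [hσ, ← mul_assoc, (hdc.mono le_rfl hswap).commute.symm.eq, mul_assoc]
  have hdc' : d.Disjoint (swap x (c x) * c) :=
    hdc.mono le_rfl fun y hy => (mem_support_swap_mul_imp_mem_support_ne hy).1
  have hσcycles := hdc.numCycles_mul
  have hτcycles := hdc'.numCycles_mul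
  rw [← hσ] at hσcycles
  rw [← hτ, hc.numCycles_swap_mul (hcx ▸ hx)] at hτcycles
  omega

theorem numCycles_extendDomain {β : Type*} [Fintype β] [DecidableEq β] {p : β → Prop}
    [DecidablePred p] (f : α ≃ Subtype p) (g : Perm α) :
    (g.extendDomain f).numCycles + Fintype.card α = g.numCycles + Fintype.card β := by
  have hα := card_le_univ g.support
  have hβ := card_le_univ (g.extendDomain f).support
  rw [card_support_extend_domain] at hβ
  simp only [numCycles_eq_card_cycleType_add, cycleType_extendDomain, card_support_extend_domain]
  omega

theorem numCycles_decomposeFin_symm_zero {n : ℕ} (e : Perm (Fin n)) :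
    (decomposeFin.symm (0, e)).numCycles = e.numCycles + 1 := by
  have hext : decomposeFin.symm (0, e) = e.extendDomain (finSuccAboveEquiv 0) := by
    ext z
    induction z using Fin.cases with
    | zero => simp [e.extendDomain_apply_not_subtype]
    | succ x =>
      have hx : x.succ = finSuccAboveEquiv 0 x := by simp [finSuccAboveEquiv_apply]
      rw [hx, extendDomain_apply_image]
      simp [finSuccAboveEquiv_apply]
  have := numCycles_extendDomain (finSuccAboveEquiv (0 : Fin (n + 1))) e
  simp only [Fintype.card_fin] at this
  rw [hext]
  omega

theorem numCycles_decomposeFin_symm {n : ℕ} (p : Fin (n + 1)) (e : Perm (Fin n)) :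
    (decomposeFin.symm (p, e)).numCycles = e.numCycles + if p = 0 then 1 else 0 := by
  split_ifs with hp
  · rw [hp, numCycles_decomposeFin_symm_zero]
  · have hswap : swap 0 p * decomposeFin.symm (p, e) = decomposeFin.symm (0, e) := by
      ext z
      induction z using Fin.cases <;> simp
    have := numCycles_swap_mul (σ := decomposeFin.symm (p, e)) (x := 0) (by simpa using hp)
    rw [decomposeFin_symm_apply_zero, hswap, numCycles_decomposeFin_symm_zero] at this
    omega

end Equiv.Perm

open Equiv.Perm in
theorem sum_perm_pow_numCycles_mul_pow {R : Type*} [CommSemiring R] (a b : R) (n : ℕ) :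
    ∑ π : Equiv.Perm (Fin n), a ^ π.numCycles * b ^ (n - π.numCycles)
      = ∏ j ∈ range n, (a + j * b) := by
  induction n with
  | zero => simp [Subsingleton.elim _ (1 : Equiv.Perm (Fin 0)), numCycles_one]
  | succ n ih =>
    have hterm (p : Fin (n + 1)) (e : Equiv.Perm (Fin n)) :
        a ^ (decomposeFin.symm (p, e)).numCycles
            * b ^ (n + 1 - (decomposeFin.symm (p, e)).numCycles)
          = (if p = 0 then a else b) * (a ^ e.numCycles * b ^ (n - e.numCycles)) := by
      rw [numCycles_decomposeFin_symm]
      exact pow_add_ite_mul_pow_sub a b (by simpa using e.numCycles_le) _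
    rw [← decomposeFin.symm.sum_comp, Fintype.sum_prod_type, prod_range_succ, ← ih]
    simp only [hterm, ← mul_sum, Fin.sum_univ_succ, Fin.succ_ne_zero, if_true, if_false,
      sum_const, card_univ, Fintype.card_fin]
    ring

theorem sum_stirlingFirst_mul_pow {R : Type*} [CommSemiring R] (a b : R) (n : ℕ) :
    ∑ k ∈ range (n + 1), (stirlingFirst n k : R) * a ^ k * b ^ (n - k)
      = ∑ π : Equiv.Perm (Fin n), a ^ π.numCycles * b ^ (n - π.numCycles) := by
  rw [← sum_fiberwise_of_maps_to (g := Equiv.Perm.numCycles) (t := range (n + 1))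
    fun π _ => mem_range.2 (Nat.lt_succ_of_le (by simpa using π.numCycles_le))]
  refine sum_congr rfl fun k _ => ?_
  have hfiber : ∀ π ∈ univ.filter fun π : Equiv.Perm (Fin n) => π.numCycles = k,
      a ^ π.numCycles * b ^ (n - π.numCycles) = a ^ k * b ^ (n - k) :=
    fun π hπ => by rw [(mem_filter.1 hπ).2]
  rw [sum_congr rfl hfiber, sum_const, nsmul_eq_mul, mul_assoc]
  rfl

theorem evenCount_le_card {m : ℕ} {α : Type*} [Fintype α] [DecidableEq α] (f : Fin m → α) :
    evenCount f ≤ Fintype.card α := by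
  refine card_le_card_of_injOn f (fun _ _ => mem_univ _) fun p hp q hq hpq => ?_
  simp only [evenFilter, coe_filter, mem_univ, true_and, Set.mem_ofPred_eq] at hp hq
  rcases lt_trichotomy p q with h | h | h
  · exact absurd hpq (hq.2 p h)
  · exact h
  · exact absurd hpq.symm (hp.2 q h)

def insertPair {n : ℕ} (g : Fin (2 * n + 1)) (σ : Fin (2 * n) → Fin n) :
    Fin (2 * (n + 1)) → Fin (n + 1) := fun p =>
  if h : (p : ℕ) < g then (σ ⟨p, by omega⟩).castSucc
  else if h' : (p : ℕ) < g + 2 then Fin.last n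
  else (σ ⟨p - 2, by omega⟩).castSucc

def insertPairPos {n : ℕ} (g : Fin (2 * n + 1)) (i : Fin (2 * n)) : Fin (2 * (n + 1)) :=
  if (i : ℕ) < g then ⟨i, by omega⟩ else ⟨i + 2, by omega⟩

section InsertPair

variable {n : ℕ} {g : Fin (2 * n + 1)} {σ : Fin (2 * n) → Fin n}

theorem val_insertPairPos (i : Fin (2 * n)) :
    (insertPairPos g i : ℕ) = if (i : ℕ) < g then (i : ℕ) else i + 2 := by
  unfold insertPairPos; split_ifs <;> rfl

theorem insertPairPos_strictMono : StrictMono (insertPairPos g) := by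
  intro i j hij
  have : (i : ℕ) < j := hij
  simp only [Fin.lt_def, val_insertPairPos]
  split_ifs <;> omega

theorem val_insertPairPos_ne (i : Fin (2 * n)) :
    (insertPairPos g i : ℕ) ≠ g ∧ (insertPairPos g i : ℕ) ≠ g + 1 := by
  rw [val_insertPairPos]; split_ifs <;> omega

theorem insertPair_insertPairPos (i : Fin (2 * n)) :
    insertPair g σ (insertPairPos g i) = (σ i).castSucc := by
  unfold insertPair
  by_cases h : (i : ℕ) < g
  · have hv : (insertPairPos g i : ℕ) = i := by simp [val_insertPairPos, h]
    rw [dif_pos (by omega)]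
    simp only [hv]
  · have hv : (insertPairPos g i : ℕ) = i + 2 := by simp [val_insertPairPos, h]
    rw [dif_neg (by omega), dif_neg (by omega)]
    simp only [hv, Nat.add_sub_cancel]

theorem insertPair_of_mem_gap {p : Fin (2 * (n + 1))} (hp : (p : ℕ) = g ∨ (p : ℕ) = g + 1) :
    insertPair g σ p = Fin.last n := by
  unfold insertPair
  rw [dif_neg (by omega), dif_pos (by omega)]

theorem mem_gap_or_exists_insertPairPos (p : Fin (2 * (n + 1))) :
    ((p : ℕ) = g ∨ (p : ℕ) = g + 1) ∨ ∃ i, insertPairPos g i = p := by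
  by_cases h : (p : ℕ) < g
  · exact .inr ⟨⟨p, by omega⟩, Fin.ext (by simp [val_insertPairPos, h])⟩
  by_cases h' : (p : ℕ) < g + 2
  · exact .inl (by omega)
  · refine .inr ⟨⟨p - 2, by omega⟩, Fin.ext ?_⟩
    simp only [val_insertPairPos]
    split_ifs <;> omega

theorem insertPair_eq_last_iff (p : Fin (2 * (n + 1))) :
    insertPair g σ p = Fin.last n ↔ (p : ℕ) = g ∨ (p : ℕ) = g + 1 := by
  refine ⟨fun hp => ?_, insertPair_of_mem_gap⟩
  rcases mem_gap_or_exists_insertPairPos (g := g) p with hgap | ⟨i, rfl⟩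
  · exact hgap
  · rw [insertPair_insertPairPos] at hp
    exact absurd hp (Fin.castSucc_ne_last _)

theorem card_filter_insertPair_last : #{p | insertPair g σ p = Fin.last n} = 2 := by
  have : ({p | insertPair g σ p = Fin.last n} : Finset _)
      = {⟨g, by omega⟩, ⟨g + 1, by omega⟩} := by
    ext p
    simp only [mem_filter, mem_univ, true_and, insertPair_eq_last_iff]
    simp [Fin.ext_iff]
  rw [this, card_pair (by simp [Fin.ext_iff])]

theorem card_filter_insertPair_castSucc (j : Fin n) :
    #{p | insertPair g σ p = j.castSucc} = #{i | σ i = j} := by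
  rw [← card_image_of_injective _ (insertPairPos_strictMono (g := g)).injective]
  apply congrArg
  ext p
  simp only [mem_filter, mem_univ, true_and, mem_image]
  rcases mem_gap_or_exists_insertPairPos (g := g) p with hgap | ⟨i, rfl⟩
  · rw [insertPair_of_mem_gap hgap]
    refine ⟨fun h => absurd h.symm (Fin.castSucc_ne_last _), ?_⟩
    rintro ⟨i, -, rfl⟩
    have := val_insertPairPos_ne (g := g) i
    omega
  · simp only [insertPair_insertPairPos, Fin.castSucc_inj,
      insertPairPos_strictMono.injective.eq_iff, exists_eq_right]

theorem isStirling_insertPair_iff : IsStirling (n + 1) (insertPair g σ) ↔ IsStirling n σ := by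
  constructor
  · rintro ⟨hcount, horder⟩
    refine ⟨fun j => card_filter_insertPair_castSucc (g := g) j ▸ hcount j.castSucc,
      fun p q r hpq hqr hpr => ?_⟩
    have := horder _ _ _ (insertPairPos_strictMono (g := g) hpq) (insertPairPos_strictMono hqr)
      (by rw [insertPair_insertPairPos, insertPair_insertPairPos, hpr])
    rwa [insertPair_insertPairPos, insertPair_insertPairPos, Fin.castSucc_lt_castSucc_iff] at this
  · rintro ⟨hcount, horder⟩
    refine ⟨Fin.lastCases card_filter_insertPair_last
      fun j => (card_filter_insertPair_castSucc j).trans (hcount j), fun p q r hpq hqr hpr => ?_⟩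
    have hpq' : (p : ℕ) < q := hpq
    have hqr' : (q : ℕ) < r := hqr
    rcases mem_gap_or_exists_insertPairPos (g := g) p with hp | ⟨i, rfl⟩
    · have hr := (insertPair_eq_last_iff r).1 (hpr ▸ insertPair_of_mem_gap hp)
      omega
    rcases mem_gap_or_exists_insertPairPos (g := g) r with hr | ⟨k, rfl⟩
    · rw [insertPair_of_mem_gap hr, insertPair_insertPairPos] at hpr
      exact absurd hpr (Fin.castSucc_ne_last _)
    rw [insertPair_insertPairPos]
    rcases mem_gap_or_exists_insertPairPos (g := g) q with hq | ⟨j, rfl⟩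
    · rw [insertPair_of_mem_gap hq]
      exact Fin.castSucc_lt_last _
    rw [insertPair_insertPairPos, Fin.castSucc_lt_castSucc_iff]
    rw [insertPair_insertPairPos, insertPair_insertPairPos, Fin.castSucc_inj] at hpr
    exact horder i j k (insertPairPos_strictMono.lt_iff_lt.1 hpq)
      (insertPairPos_strictMono.lt_iff_lt.1 hqr) hpr

theorem insertPairPos_mem_evenFilter_iff (i : Fin (2 * n)) :
    insertPairPos g i ∈ evenFilter (insertPair g σ) ↔ i ∈ evenFilter σ := by
  simp only [evenFilter, mem_filter, mem_univ, true_and]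
  have hpar : (insertPairPos g i : ℕ) % 2 = 1 ↔ (i : ℕ) % 2 = 1 := by
    rw [val_insertPairPos]; split_ifs <;> omega
  rw [hpar]
  refine and_congr_right fun _ => ⟨fun h j hj => ?_, fun h q hq => ?_⟩
  · have := h _ (insertPairPos_strictMono hj)
    rwa [insertPair_insertPairPos, insertPair_insertPairPos, Ne, Fin.castSucc_inj] at this
  · rw [insertPair_insertPairPos]
    rcases mem_gap_or_exists_insertPairPos (g := g) q with hq' | ⟨j, rfl⟩
    · rw [insertPair_of_mem_gap hq']
      exact Fin.castSucc_ne_last _ |>.symm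
    · rw [insertPair_insertPairPos, Ne, Fin.castSucc_inj]
      exact h j (insertPairPos_strictMono.lt_iff_lt.1 hq)

theorem mem_evenFilter_insertPair_gap :
    (⟨g, by omega⟩ : Fin (2 * (n + 1))) ∈ evenFilter (insertPair g σ) ↔
      (g : ℕ) % 2 = 1 := by
  simp only [evenFilter, mem_filter, mem_univ, true_and, and_iff_left_iff_imp]
  intro _ q hq
  rw [insertPair_of_mem_gap (p := ⟨g, by omega⟩) (.inl rfl)]
  rcases mem_gap_or_exists_insertPairPos (g := g) q with hq' | ⟨j, rfl⟩
  · have : (q : ℕ) < g := hq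
    omega
  · rw [insertPair_insertPairPos]
    exact Fin.castSucc_ne_last _

theorem not_mem_evenFilter_insertPair_gap_succ :
    (⟨g + 1, by omega⟩ : Fin (2 * (n + 1))) ∉ evenFilter (insertPair g σ) := by
  simp only [evenFilter, mem_filter, mem_univ, true_and, not_and, not_forall, not_not]
  exact fun _ => ⟨⟨g, by omega⟩, Fin.lt_def.2 (Nat.lt_succ_self _),
    by rw [insertPair_of_mem_gap (.inl rfl), insertPair_of_mem_gap (.inr rfl)]⟩

theorem evenFilter_insertPair :
    evenFilter (insertPair g σ) = if (g : ℕ) % 2 = 1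
      then insert ⟨g, by omega⟩ ((evenFilter σ).image (insertPairPos g))
      else (evenFilter σ).image (insertPairPos g) := by
  have hgap : ∀ p ∈ (evenFilter σ).image (insertPairPos g),
      (p : ℕ) ≠ g ∧ (p : ℕ) ≠ g + 1 := by
    simp only [mem_image]
    rintro _ ⟨i, -, rfl⟩
    exact val_insertPairPos_ne i
  ext p
  rcases mem_gap_or_exists_insertPairPos (g := g) p with (hp | hp) | ⟨i, rfl⟩
  · rw [show p = ⟨g, by omega⟩ from Fin.ext hp, mem_evenFilter_insertPair_gap]
    split_ifs with hodd
    · simp [hodd]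
    · exact iff_of_false hodd fun h => (hgap _ h).1 rfl
  · rw [show p = ⟨g + 1, by omega⟩ from Fin.ext hp]
    refine iff_of_false not_mem_evenFilter_insertPair_gap_succ ?_
    split_ifs
    · simp only [mem_insert, Fin.ext_iff, Nat.succ_ne_self, false_or]
      exact fun h => (hgap _ h).2 rfl
    · exact fun h => (hgap _ h).2 rfl
  · have hne : insertPairPos g i ≠ ⟨g, by omega⟩ := fun h =>
      (val_insertPairPos_ne i).1 (congrArg Fin.val h)
    rw [insertPairPos_mem_evenFilter_iff]
    split_ifs
    · rw [mem_insert, insertPairPos_strictMono.injective.mem_finset_image, or_iff_right hne]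
    · rw [insertPairPos_strictMono.injective.mem_finset_image]

/-- The new letter's first copy sits at the 0-indexed position `g`, which is even in the
1-indexed convention of the paper exactly when `g` is odd. -/
theorem evenCount_insertPair :
    evenCount (insertPair g σ) = evenCount σ + if (g : ℕ) % 2 = 1 then 1 else 0 := by
  have hcard : #((evenFilter σ).image (insertPairPos g)) = evenCount σ :=
    card_image_of_injective _ insertPairPos_strictMono.injective
  rw [evenCount, evenFilter_insertPair]
  split_ifs
  · rw [card_insert_of_notMem, hcard]
    simp only [mem_image, not_exists, not_and]
    exact fun i _ h => (val_insertPairPos_ne i).1 (congrArg Fin.val h)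
  · rw [hcard, add_zero]

theorem insertPair_injective2 : Function.Injective2 (insertPair (n := n)) := by
  intro g g' σ σ' h
  have hgg' : (g : ℕ) = g' ∨ (g : ℕ) = g' + 1 :=
    (insertPair_eq_last_iff (σ := σ') ⟨g, by omega⟩).1
      (by rw [← h]; exact insertPair_of_mem_gap (.inl rfl))
  have hg'g : (g' : ℕ) = g ∨ (g' : ℕ) = g + 1 :=
    (insertPair_eq_last_iff (σ := σ) ⟨g', by omega⟩).1
      (by rw [h]; exact insertPair_of_mem_gap (.inl rfl))
  obtain rfl : g = g' := Fin.ext (by omega)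
  refine ⟨rfl, funext fun i => Fin.castSucc_injective _ ?_⟩
  rw [← insertPair_insertPairPos (g := g), ← insertPair_insertPairPos (g := g), h]

theorem IsStirling.exists_insertPair_eq {τ : Fin (2 * (n + 1)) → Fin (n + 1)}
    (hτ : IsStirling (n + 1) τ) : ∃ g σ, insertPair g σ = τ := by
  obtain ⟨a, b, hab, hfilter⟩ := card_eq_two.1 (hτ.1 (Fin.last n))
  have hmem (p) : τ p = Fin.last n ↔ p = a ∨ p = b := by
    simpa using congrArg (p ∈ ·) hfilter
  clear hfilter
  wlog hlt : a < b generalizing a b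
  · exact this b a hab.symm (fun p => (hmem p).trans or_comm)
      (lt_of_le_of_ne (not_lt.1 hlt) hab.symm)
  -- a letter strictly between the two copies of `Fin.last n` would have to exceed it
  have hadj : (b : ℕ) = a + 1 := by
    have hlt' : (a : ℕ) < b := hlt
    by_contra hne
    have := hτ.2 a ⟨a + 1, by omega⟩ b (Fin.lt_def.2 (by simp)) (Fin.lt_def.2 (by simp; omega))
      (by rw [(hmem a).2 (.inl rfl), (hmem b).2 (.inr rfl)])
    rw [(hmem a).2 (.inl rfl)] at this
    exact not_lt.2 (Fin.le_last _) this
  set g : Fin (2 * n + 1) := ⟨a, by omega⟩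
  have hlast (i) : τ (insertPairPos g i) ≠ Fin.last n := fun h => by
    have := val_insertPairPos_ne (g := g) i
    rcases (hmem _).1 h with h | h <;> rw [h] at this <;> simp [g] at this
    omega
  refine ⟨g, fun i => (τ (insertPairPos g i)).castPred (hlast i), funext fun p => ?_⟩
  rcases mem_gap_or_exists_insertPairPos (g := g) p with hp | ⟨i, rfl⟩
  · rw [insertPair_of_mem_gap hp, eq_comm, hmem, Fin.ext_iff, Fin.ext_iff]
    simp only [g] at hp
    omega
  · rw [insertPair_insertPairPos, Fin.castSucc_castPred]

end InsertPair

theorem sum_stirlingFinset_succ {M : Type*} [AddCommMonoid M] (n : ℕ)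
    (f : (Fin (2 * (n + 1)) → Fin (n + 1)) → M) :
    ∑ τ ∈ stirlingFinset (n + 1), f τ
      = ∑ g, ∑ σ ∈ stirlingFinset n, f (insertPair g σ) := by
  rw [← sum_product']
  refine (sum_bij (fun x _ => insertPair x.1 x.2) ?_ ?_ ?_ fun _ _ => rfl).symm
  · intro x hx
    simp only [stirlingFinset, mem_product, mem_filter, mem_univ, true_and] at hx ⊢
    exact isStirling_insertPair_iff.2 hx
  · intro x _ y _ h
    obtain ⟨h₁, h₂⟩ := insertPair_injective2 h
    exact Prod.ext h₁ h₂
  · intro τ hτ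
    simp only [stirlingFinset, mem_filter, mem_univ, true_and] at hτ
    obtain ⟨g, σ, rfl⟩ := hτ.exists_insertPair_eq
    exact ⟨(g, σ), by simpa [stirlingFinset] using isStirling_insertPair_iff.1 hτ, rfl⟩

theorem sum_range_ite_mod_two {M : Type*} [AddCommMonoid M] (a b : M) (n : ℕ) :
    ∑ i ∈ range (2 * n + 1), (if i % 2 = 1 then b else a) = a + n • (a + b) := by
  induction n with
  | zero => simp
  | succ n ih =>
    rw [show 2 * (n + 1) + 1 = 2 * n + 1 + 1 + 1 by ring, sum_range_succ, sum_range_succ, ih,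
      if_pos (by omega), if_neg (by omega), succ_nsmul]
    abel

theorem sum_stirlingFinset_pow_mul_pow {R : Type*} [CommSemiring R] (a b : R) (n : ℕ) :
    ∑ σ ∈ stirlingFinset n, a ^ (n - evenCount σ) * b ^ evenCount σ
      = ∏ j ∈ range n, (a + j * (a + b)) := by
  induction n with
  | zero => simp [stirlingFinset, IsStirling, evenCount, evenFilter, filter_singleton]
  | succ n ih =>
    have hterm (g : Fin (2 * n + 1)) (σ : Fin (2 * n) → Fin n) :
        a ^ (n + 1 - evenCount (insertPair g σ)) * b ^ evenCount (insertPair g σ)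
          = (if (g : ℕ) % 2 = 1 then b else a) * (a ^ (n - evenCount σ) * b ^ evenCount σ) := by
      rw [mul_comm, evenCount_insertPair, mul_comm (a ^ _)]
      exact pow_add_ite_mul_pow_sub b a (by simpa using evenCount_le_card σ) _
    simp only [sum_stirlingFinset_succ, hterm, ← mul_sum, ih, ← sum_mul, prod_range_succ]
    rw [Fin.sum_univ_eq_sum_range (fun i => if i % 2 = 1 then b else a), sum_range_ite_mod_two,
      nsmul_eq_mul]
    ring

/-- Variables: `X 0 = p`, `X 1 = q`. -/
theorem stmt_4_general (n : ℕ) :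
    ∑ σ ∈ stirlingFinset n,
        (MvPolynomial.X 0 : MvPolynomial (Fin 2) ℤ) ^ (n - evenCount σ) *
          MvPolynomial.X 1 ^ evenCount σ
      = ∑ k ∈ Finset.range (n + 1),
          (stirlingFirst n k : MvPolynomial (Fin 2) ℤ) * MvPolynomial.X 0 ^ k *
            (MvPolynomial.X 0 + MvPolynomial.X 1) ^ (n - k) := by
  rw [sum_stirlingFinset_pow_mul_pow, sum_stirlingFirst_mul_pow, sum_perm_pow_numCycles_mul_pow]

/-- identity in ℤ[p,q] (variables X 0 = p, X 1 = q). -/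
theorem stmt_4 (n : ℕ) (hn : 1 ≤ n) :
    ∑ σ ∈ stirlingFinset n,
        (MvPolynomial.X 0 : MvPolynomial (Fin 2) ℤ) ^ (n - evenCount σ) *
          MvPolynomial.X 1 ^ evenCount σ
      = ∑ k ∈ Finset.range (n + 1),
          (stirlingFirst n k : MvPolynomial (Fin 2) ℤ) * MvPolynomial.X 0 ^ k *
            (MvPolynomial.X 0 + MvPolynomial.X 1) ^ (n - k) :=
  stmt_4_general n
end

section
/- For every integer n ≥ 1, the following identity holds in ℤ[q]: the sum over all Stirling permutations σ of order n of q^{even(σ)} equals the product Π_{i=1}^{n} (i + (i−1)q). -/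
open Finset

namespace SP5

variable {m : ℕ}

def ψ (g : Fin (2*m+1)) (j : Fin (2*m)) : Fin (2*(m+1)) :=
  if (j:ℕ) < (g:ℕ) then ⟨j, by omega⟩ else ⟨(j:ℕ)+2, by omega⟩

lemma ψ_val (g : Fin (2*m+1)) (j : Fin (2*m)) :
    ((ψ g j : Fin (2*(m+1))) : ℕ) = if (j:ℕ) < (g:ℕ) then (j:ℕ) else (j:ℕ)+2 := by
  unfold ψ; split <;> rfl

lemma ψ_ne (g : Fin (2*m+1)) (j : Fin (2*m)) :
    ((ψ g j : Fin (2*(m+1))) : ℕ) ≠ (g:ℕ) ∧ ((ψ g j : Fin (2*(m+1))) : ℕ) ≠ (g:ℕ)+1 := by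
  rw [ψ_val]; split <;> omega

lemma ψ_lt_iff (g : Fin (2*m+1)) (j j' : Fin (2*m)) :
    ψ g j < ψ g j' ↔ j < j' := by
  simp only [Fin.lt_def, ψ_val]
  split <;> split <;> omega

lemma ψ_inj (g : Fin (2*m+1)) : Function.Injective (ψ g) := by
  intro a b h
  rcases lt_trichotomy a b with hl | he | hl
  · exact absurd ((ψ_lt_iff g a b).2 hl) (by rw [h]; exact lt_irrefl _)
  · exact he
  · exact absurd ((ψ_lt_iff g b a).2 hl) (by rw [h]; exact lt_irrefl _)

lemma ψ_surj (g : Fin (2*m+1)) (p : Fin (2*(m+1)))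
    (h1 : (p:ℕ) ≠ (g:ℕ)) (h2 : (p:ℕ) ≠ (g:ℕ)+1) : ∃ j, ψ g j = p := by
  by_cases h : (p:ℕ) < (g:ℕ)
  · exact ⟨⟨p, by omega⟩, by apply Fin.ext; rw [ψ_val]; simpa using h⟩
  · refine ⟨⟨(p:ℕ)-2, by omega⟩, ?_⟩
    apply Fin.ext; rw [ψ_val]
    simp only
    rw [if_neg (by omega)]
    omega

def ins (f : Fin (2*m) → Fin m) (g : Fin (2*m+1)) (p : Fin (2*(m+1))) : Fin (m+1) :=
  if h : (p:ℕ) < (g:ℕ) then (f ⟨p, by omega⟩).castSucc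
  else if h2 : (p:ℕ) < (g:ℕ) + 2 then Fin.last m
  else (f ⟨(p:ℕ)-2, by omega⟩).castSucc

lemma ins_mid (f : Fin (2*m) → Fin m) (g : Fin (2*m+1)) (p : Fin (2*(m+1)))
    (h1 : ¬ (p:ℕ) < (g:ℕ)) (h2 : (p:ℕ) < (g:ℕ)+2) : ins f g p = Fin.last m := by
  unfold ins; rw [dif_neg h1, dif_pos h2]

lemma ins_ψ (f : Fin (2*m) → Fin m) (g : Fin (2*m+1)) (j : Fin (2*m)) :
    ins f g (ψ g j) = (f j).castSucc := by
  rcases lt_or_ge (j:ℕ) (g:ℕ) with h | h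
  · have hv : ((ψ g j : Fin (2*(m+1))) : ℕ) = (j:ℕ) := by rw [ψ_val, if_pos h]
    unfold ins
    rw [dif_pos (by rw [hv]; exact h)]
    congr 1
    · apply congrArg; apply Fin.ext; simpa using hv
  · have hv : ((ψ g j : Fin (2*(m+1))) : ℕ) = (j:ℕ)+2 := by rw [ψ_val, if_neg (by omega)]
    unfold ins
    rw [dif_neg (by omega), dif_neg (by omega)]
    congr 1
    · apply congrArg; apply Fin.ext; simp; omega

lemma ins_eq_last_iff (f : Fin (2*m) → Fin m) (g : Fin (2*m+1)) (p : Fin (2*(m+1))) :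
    ins f g p = Fin.last m ↔ ((p:ℕ) = (g:ℕ) ∨ (p:ℕ) = (g:ℕ)+1) := by
  constructor
  · intro h
    by_contra hc
    push_neg at hc
    obtain ⟨j, rfl⟩ := ψ_surj g p hc.1 hc.2
    rw [ins_ψ] at h
    exact absurd h (Fin.castSucc_lt_last (f j)).ne
  · intro h
    exact ins_mid f g p (by omega) (by omega)

-- NEW PART

lemma filter_ins_last (f : Fin (2*m) → Fin m) (g : Fin (2*m+1)) :
    (univ.filter fun p : Fin (2*(m+1)) => ins f g p = Fin.last m)
      = {⟨(g:ℕ), by omega⟩, ⟨(g:ℕ)+1, by omega⟩} := by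
  ext p
  simp only [mem_filter, mem_univ, true_and, mem_insert, mem_singleton]
  rw [ins_eq_last_iff]
  simp [Fin.ext_iff]

lemma filter_ins_castSucc (f : Fin (2*m) → Fin m) (g : Fin (2*m+1)) (k : Fin m) :
    (univ.filter fun p : Fin (2*(m+1)) => ins f g p = k.castSucc)
      = (univ.filter fun j => f j = k).image (ψ g) := by
  ext p
  simp only [mem_filter, mem_univ, true_and, mem_image]
  constructor
  · intro h
    have hne : ¬ ((p:ℕ) = (g:ℕ) ∨ (p:ℕ) = (g:ℕ)+1) := by
      intro hc
      rw [(ins_eq_last_iff f g p).2 hc] at h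
      exact absurd h.symm (Fin.castSucc_lt_last k).ne
    push_neg at hne
    obtain ⟨j, rfl⟩ := ψ_surj g p hne.1 hne.2
    rw [ins_ψ] at h
    exact ⟨j, Fin.castSucc_injective _ h, rfl⟩
  · rintro ⟨j, hj, rfl⟩
    rw [ins_ψ, hj]

lemma ins_mem_iff (f : Fin (2*m) → Fin m) (g : Fin (2*m+1)) :
    ins f g ∈ stirlingFinset (m+1) ↔ f ∈ stirlingFinset m := by
  simp only [stirlingFinset, mem_filter, mem_univ, true_and, IsStirling]
  constructor
  · rintro ⟨hc, hb⟩
    constructor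
    · intro k
      have := hc k.castSucc
      rw [filter_ins_castSucc, card_image_of_injective _ (ψ_inj g)] at this
      exact this
    · intro p q r hpq hqr he
      have h1 := hb (ψ g p) (ψ g q) (ψ g r) ((ψ_lt_iff g p q).2 hpq)
        ((ψ_lt_iff g q r).2 hqr)
      rw [ins_ψ, ins_ψ, ins_ψ] at h1
      have := h1 (by rw [he])
      exact (Fin.castSucc_lt_castSucc_iff).1 this
  · rintro ⟨hc, hb⟩
    constructor
    · intro k
      rcases Fin.eq_castSucc_or_eq_last k with ⟨k', rfl⟩ | rfl
      · rw [filter_ins_castSucc, card_image_of_injective _ (ψ_inj g)]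
        exact hc k'
      · rw [filter_ins_last]
        rw [card_insert_of_notMem (by simp [Fin.ext_iff]), card_singleton]
    · intro p q r hpq hqr he
      by_cases hp : (p:ℕ) = (g:ℕ) ∨ (p:ℕ) = (g:ℕ)+1
      · -- ins f g p = last, so r also in {g,g+1}; impossible
        have hrl : ins f g r = Fin.last m := by
          rw [← he]; exact (ins_eq_last_iff f g p).2 hp
        have hr := (ins_eq_last_iff f g r).1 hrl
        have hpq' : (p:ℕ) < (q:ℕ) := hpq
        have hqr' : (q:ℕ) < (r:ℕ) := hqr
        omega
      · push_neg at hp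
        obtain ⟨jp, rfl⟩ := ψ_surj g p hp.1 hp.2
        have hrne : ¬ ((r:ℕ) = (g:ℕ) ∨ (r:ℕ) = (g:ℕ)+1) := by
          intro hc2
          have : ins f g (ψ g jp) = Fin.last m := by
            rw [he]; exact (ins_eq_last_iff f g r).2 hc2
          rw [ins_ψ] at this
          exact absurd this (Fin.castSucc_lt_last _).ne
        push_neg at hrne
        obtain ⟨jr, rfl⟩ := ψ_surj g r hrne.1 hrne.2
        by_cases hq : (q:ℕ) = (g:ℕ) ∨ (q:ℕ) = (g:ℕ)+1
        · rw [(ins_eq_last_iff f g q).2 hq, ins_ψ]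
          exact Fin.castSucc_lt_last _
        · push_neg at hq
          obtain ⟨jq, rfl⟩ := ψ_surj g q hq.1 hq.2
          simp only [ins_ψ] at he ⊢
          rw [Fin.castSucc_lt_castSucc_iff]
          exact hb jp jq jr ((ψ_lt_iff g jp jq).1 hpq) ((ψ_lt_iff g jq jr).1 hqr)
            (Fin.castSucc_injective _ he)

lemma evenFilter_ins (f : Fin (2*m) → Fin m) (g : Fin (2*m+1)) :
    evenFilter (ins f g)
      = (evenFilter f).image (ψ g) ∪
        (univ.filter fun p : Fin (2*(m+1)) => (p:ℕ) = (g:ℕ) ∧ (g:ℕ) % 2 = 1) := by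
  ext p
  simp only [evenFilter, mem_filter, mem_univ, true_and, mem_union, mem_image]
  by_cases hpg : (p:ℕ) = (g:ℕ)
  · constructor
    · rintro ⟨hpar, -⟩
      right; exact ⟨hpg, by omega⟩
    · rintro (⟨j, hj, rfl⟩ | ⟨-, hodd⟩)
      · exact absurd hpg (ψ_ne g j).1
      · refine ⟨by omega, ?_⟩
        intro q hq hcq
        have hql : (q:ℕ) < (g:ℕ) := by
          have := Fin.lt_def.1 hq; omega
        have h1 : ins f g q = (f ⟨(q:ℕ), by omega⟩).castSucc := dif_pos hql
        have h2 : ins f g p = Fin.last m := ins_mid f g p (by omega) (by omega)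
        rw [h1, h2] at hcq
        exact absurd hcq (Fin.castSucc_lt_last _).ne
  · by_cases hpg1 : (p:ℕ) = (g:ℕ)+1
    · constructor
      · rintro ⟨-, hval⟩
        exfalso
        refine hval ⟨(g:ℕ), by omega⟩ (by rw [Fin.lt_def]; show (g:ℕ) < (p:ℕ); omega) ?_
        rw [ins_mid f g _ (by show ¬ (g:ℕ) < (g:ℕ); omega) (by show (g:ℕ) < (g:ℕ)+2; omega),
          ins_mid f g p (by omega) (by omega)]
      · rintro (⟨j, hj, rfl⟩ | ⟨h1, -⟩)
        · exact absurd hpg1 (ψ_ne g j).2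
        · omega
    · obtain ⟨j, rfl⟩ := ψ_surj g p hpg hpg1
      have hpar : ((ψ g j : Fin (2*(m+1))):ℕ) % 2 = (j:ℕ) % 2 := by
        rw [ψ_val]; split <;> omega
      constructor
      · rintro ⟨h1, h2⟩
        left
        refine ⟨j, ⟨by omega, ?_⟩, rfl⟩
        intro j' hj' hcc
        refine h2 (ψ g j') ((ψ_lt_iff g j' j).2 hj') ?_
        rw [ins_ψ, ins_ψ, hcc]
      · rintro (⟨j', ⟨hpar', hno⟩, hjj⟩ | ⟨habs, -⟩)
        · have hjeq : j' = j := ψ_inj g hjj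
          subst hjeq
          refine ⟨by omega, ?_⟩
          intro q hq hcq
          by_cases hqg : (q:ℕ) = (g:ℕ) ∨ (q:ℕ) = (g:ℕ)+1
          · rw [ins_mid f g q (by omega) (by omega), ins_ψ] at hcq
            exact absurd hcq.symm (Fin.castSucc_lt_last _).ne
          · push_neg at hqg
            obtain ⟨j'', rfl⟩ := ψ_surj g q hqg.1 hqg.2
            simp only [ins_ψ] at hcq
            exact hno j'' ((ψ_lt_iff g j'' j').1 hq) (Fin.castSucc_injective _ hcq)
        · exact absurd habs (ψ_ne g j).1

lemma evenCount_ins (f : Fin (2*m) → Fin m) (g : Fin (2*m+1)) :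
    evenCount (ins f g) = evenCount f + (g:ℕ) % 2 := by
  unfold evenCount
  rw [evenFilter_ins, card_union_of_disjoint, card_image_of_injective _ (ψ_inj g)]
  · congr 1
    by_cases h : (g:ℕ) % 2 = 1
    · have he : (univ.filter fun p : Fin (2*(m+1)) => (p:ℕ) = (g:ℕ) ∧ (g:ℕ)%2=1)
          = {⟨(g:ℕ), by omega⟩} := by
        ext p; simp [Fin.ext_iff, h]
      rw [he, card_singleton, h]
    · have h0 : (g:ℕ) % 2 = 0 := by omega
      have he : (univ.filter fun p : Fin (2*(m+1)) => (p:ℕ) = (g:ℕ) ∧ (g:ℕ)%2=1)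
          = ∅ := by
        ext p; simp [h]
      rw [he, card_empty, h0]
  · rw [disjoint_left]
    rintro p hp hp2
    simp only [mem_image] at hp
    obtain ⟨j, -, rfl⟩ := hp
    simp only [mem_filter] at hp2
    exact (ψ_ne g j).1 hp2.2.1

lemma ins_inj (f f' : Fin (2*m) → Fin m) (g g' : Fin (2*m+1))
    (h : ins f g = ins f' g') : f = f' ∧ g = g' := by
  have hg : g = g' := by
    have h1 := (ins_eq_last_iff f g ⟨(g:ℕ), by omega⟩).2 (Or.inl rfl)
    rw [h] at h1
    have h1' := (ins_eq_last_iff f' g' _).1 h1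
    have h2 := (ins_eq_last_iff f' g' ⟨(g':ℕ), by omega⟩).2 (Or.inl rfl)
    rw [← h] at h2
    have h2' := (ins_eq_last_iff f g _).1 h2
    apply Fin.ext
    simp only [Fin.val_mk] at h1' h2'
    omega
  subst hg
  refine ⟨funext fun j => ?_, rfl⟩
  have hc := congrFun h (ψ g j)
  rw [ins_ψ, ins_ψ] at hc
  exact Fin.castSucc_injective _ hc

lemma ins_surj (F : Fin (2*(m+1)) → Fin (m+1)) (hF : F ∈ stirlingFinset (m+1)) :
    ∃ f g, ins f g = F := by
  simp only [stirlingFinset, mem_filter, mem_univ, true_and, IsStirling] at hF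
  obtain ⟨hc, hbet⟩ := hF
  have key : ∀ a b : Fin (2*(m+1)), a < b →
      (univ.filter fun p => F p = Fin.last m) = {a, b} → ∃ f g, ins f g = F := by
    intro a b hab hset
    have hmem : ∀ p : Fin (2*(m+1)), F p = Fin.last m ↔ (p = a ∨ p = b) := by
      intro p
      have := Finset.ext_iff.1 hset p
      simpa using this
    have hb1 : (b:ℕ) = (a:ℕ)+1 := by
      by_contra hb1
      have hab' : (a:ℕ) < (b:ℕ) := hab
      have hlt : (a:ℕ)+1 < (b:ℕ) := by omega
      have hq : ((⟨(a:ℕ)+1, by omega⟩ : Fin (2*(m+1))) : ℕ) = (a:ℕ)+1 := rfl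
      have h3 := hbet a ⟨(a:ℕ)+1, by omega⟩ b
        (by rw [Fin.lt_def]; omega) (by rw [Fin.lt_def]; exact (by simpa using hlt))
        (by rw [(hmem a).2 (Or.inl rfl), (hmem b).2 (Or.inr rfl)])
      rw [(hmem a).2 (Or.inl rfl)] at h3
      exact absurd h3 (not_lt.2 (Fin.le_last _))
    have hlt2 : (a:ℕ) < 2*m+1 := by
      have := b.isLt; omega
    set g : Fin (2*m+1) := ⟨(a:ℕ), hlt2⟩ with hgdef
    have hga : (g:ℕ) = (a:ℕ) := rfl
    have hne : ∀ j : Fin (2*m), F (ψ g j) ≠ Fin.last m := by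
      intro j hl
      rcases (hmem _).1 hl with hh | hh
      · exact (ψ_ne g j).1 (by rw [hh])
      · refine (ψ_ne g j).2 ?_
        rw [hh]
        omega
    refine ⟨fun j => (F (ψ g j)).castPred (hne j), g, funext fun p => ?_⟩
    by_cases hp : (p:ℕ) = (g:ℕ) ∨ (p:ℕ) = (g:ℕ)+1
    · rw [ins_mid _ g p (by omega) (by omega)]
      symm
      refine (hmem p).2 ?_
      rcases hp with hh | hh
      · left; exact Fin.ext (by omega)
      · right; exact Fin.ext (by omega)
    · push_neg at hp
      obtain ⟨j, rfl⟩ := ψ_surj g p hp.1 hp.2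
      rw [ins_ψ]
      exact Fin.castSucc_castPred _ _
  obtain ⟨a, b, hab, hset⟩ := Finset.card_eq_two.1 (hc (Fin.last m))
  rcases lt_or_gt_of_ne hab with h | h
  · exact key a b h hset
  · exact key b a h (by rw [hset, Finset.pair_comm])

lemma sum_pow_mod (M : ℕ) :
    ∑ g : Fin (2*M+1), (Polynomial.X : Polynomial ℤ) ^ ((g:ℕ) % 2)
      = Polynomial.C ((M:ℤ)+1) + Polynomial.C (M:ℤ) * Polynomial.X := by
  rw [Fin.sum_univ_eq_sum_range (fun i => (Polynomial.X : Polynomial ℤ) ^ (i % 2))]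
  induction M with
  | zero => simp
  | succ k ih =>
      have h1 : 2*(k+1)+1 = (2*k+1)+1+1 := by ring
      rw [h1, Finset.sum_range_succ, Finset.sum_range_succ, ih]
      have e1 : ((2*k+1) % 2) = 1 := by omega
      have e2 : ((2*k+1+1) % 2) = 0 := by omega
      rw [e1, e2]
      push_cast [Polynomial.C_add, Polynomial.C_1]
      ring

lemma key_sum (m : ℕ) :
    ∑ σ ∈ stirlingFinset (m+1), (Polynomial.X : Polynomial ℤ) ^ evenCount σ
      = ∏ i ∈ Finset.Icc 1 (m+1),
          (Polynomial.C (i : ℤ) + Polynomial.C ((i : ℤ) - 1) * Polynomial.X) := by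
  induction m with
  | zero =>
      have hs : stirlingFinset 1 = {fun _ => (0 : Fin 1)} := by decide
      rw [hs, Finset.sum_singleton]
      have h0 : evenCount (fun _ : Fin (2*1) => (0 : Fin 1)) = 0 := by decide
      rw [h0]
      simp
  | succ k ih =>
      have hb : ∑ fg ∈ (stirlingFinset (k+1)) ×ˢ (univ : Finset (Fin (2*(k+1)+1))),
            (Polynomial.X : Polynomial ℤ) ^ (evenCount fg.1 + (fg.2:ℕ)%2)
          = ∑ σ ∈ stirlingFinset (k+1+1), (Polynomial.X : Polynomial ℤ) ^ evenCount σ := by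
        refine Finset.sum_bij (fun fg _ => ins fg.1 fg.2) ?_ ?_ ?_ ?_
        · rintro ⟨f, g⟩ hfg
          rw [Finset.mem_product] at hfg
          exact (ins_mem_iff f g).2 hfg.1
        · rintro ⟨f, g⟩ h1 ⟨f', g'⟩ h2 he
          obtain ⟨e1, e2⟩ := ins_inj f f' g g' he
          simp [e1, e2]
        · intro F hFm
          obtain ⟨f, g, hfg⟩ := ins_surj F hFm
          have hf : f ∈ stirlingFinset (k+1) := by
            rw [← ins_mem_iff f g, hfg]; exact hFm
          exact ⟨⟨f, g⟩, Finset.mem_product.2 ⟨hf, mem_univ g⟩, hfg⟩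
        · rintro ⟨f, g⟩ hfg
          rw [evenCount_ins]
      rw [← hb, Finset.sum_product]
      simp only [pow_add]
      rw [← Finset.sum_mul_sum]
      rw [sum_pow_mod, ih]
      rw [Finset.prod_Icc_succ_top (by omega : 1 ≤ k+1+1)]
      congr 1
      push_cast
      ring

end SP5

/-- identity in ℤ[q]. -/
theorem stmt_5 (n : ℕ) (hn : 1 ≤ n) :
    ∑ σ ∈ stirlingFinset n, (Polynomial.X : Polynomial ℤ) ^ evenCount σ
      = ∏ i ∈ Finset.Icc 1 n,
          (Polynomial.C (i : ℤ) + Polynomial.C ((i : ℤ) - 1) * Polynomial.X) := by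
  obtain ⟨m, rfl⟩ : ∃ m, n = m + 1 := ⟨n - 1, by omega⟩
  exact SP5.key_sum m
end

section
/- For every integer n ≥ 1, the number of Stirling permutations of order n equals the double factorial (2n−1)!! = Π_{i=1}^{n} (2i−1). -/
open Finset

namespace StirAux

variable {n : ℕ}

def insF (f : Fin (2*n) → Fin n) (p : Fin (2*n+1)) : Fin (2*(n+1)) → Fin (n+1) :=
  fun i =>
    if h1 : (i : ℕ) < (p : ℕ) then (f ⟨i, by have := p.isLt; omega⟩).castSucc
    else if h2 : (i : ℕ) ≤ (p : ℕ) + 1 then Fin.last n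
    else (f ⟨(i : ℕ) - 2, by have := i.isLt; omega⟩).castSucc

def eIdx (p : Fin (2*n+1)) (j : Fin (2*n)) : Fin (2*(n+1)) :=
  if (j : ℕ) < (p : ℕ) then ⟨j, by have := j.isLt; omega⟩
  else ⟨(j : ℕ) + 2, by have := j.isLt; omega⟩

lemma eIdx_val (p : Fin (2*n+1)) (j : Fin (2*n)) :
    ((eIdx p j : Fin (2*(n+1))) : ℕ) = if (j : ℕ) < (p : ℕ) then (j : ℕ) else (j : ℕ) + 2 := by
  unfold eIdx; split <;> rfl

lemma eIdx_lt_iff (p : Fin (2*n+1)) {a b : Fin (2*n)} :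
    eIdx p a < eIdx p b ↔ a < b := by
  rw [Fin.lt_def, Fin.lt_def, eIdx_val, eIdx_val]
  split <;> split <;> omega

lemma eIdx_inj (p : Fin (2*n+1)) {a b : Fin (2*n)} (h : eIdx p a = eIdx p b) : a = b := by
  have := congrArg (Fin.val) h
  rw [eIdx_val, eIdx_val] at this
  apply Fin.ext
  split at this <;> split at this <;> omega

lemma eIdx_ne (p : Fin (2*n+1)) (j : Fin (2*n)) :
    ((eIdx p j : Fin (2*(n+1))) : ℕ) ≠ (p : ℕ) ∧
    ((eIdx p j : Fin (2*(n+1))) : ℕ) ≠ (p : ℕ) + 1 := by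
  rw [eIdx_val]; split <;> omega

lemma eIdx_surj (p : Fin (2*n+1)) (i : Fin (2*(n+1)))
    (h1 : (i : ℕ) ≠ (p : ℕ)) (h2 : (i : ℕ) ≠ (p : ℕ) + 1) :
    ∃ j, eIdx p j = i := by
  by_cases h : (i : ℕ) < (p : ℕ)
  · exact ⟨⟨i, by have := p.isLt; omega⟩, by
      apply Fin.ext; rw [eIdx_val]; simp [h]⟩
  · refine ⟨⟨(i : ℕ) - 2, by have := i.isLt; omega⟩, ?_⟩
    apply Fin.ext; rw [eIdx_val]
    have := i.isLt
    simp only []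
    split <;> omega

lemma insF_eIdx (f : Fin (2*n) → Fin n) (p : Fin (2*n+1)) (j : Fin (2*n)) :
    insF f p (eIdx p j) = (f j).castSucc := by
  unfold insF
  by_cases h : (j : ℕ) < (p : ℕ)
  · have hv : ((eIdx p j : Fin (2*(n+1))) : ℕ) = (j : ℕ) := by rw [eIdx_val]; simp [h]
    rw [dif_pos (by omega)]
    congr 1; apply Fin.ext; simp [hv]
  · have hv : ((eIdx p j : Fin (2*(n+1))) : ℕ) = (j : ℕ) + 2 := by
      rw [eIdx_val]; simp [h]
    rw [dif_neg (by omega), dif_neg (by omega)]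
    congr 1; apply Fin.ext; simp [hv]

lemma insF_eq_last_iff (f : Fin (2*n) → Fin n) (p : Fin (2*n+1)) (i : Fin (2*(n+1))) :
    insF f p i = Fin.last n ↔ (i : ℕ) = (p : ℕ) ∨ (i : ℕ) = (p : ℕ) + 1 := by
  unfold insF
  split
  · rename_i h
    exact iff_of_false (Fin.castSucc_lt_last _).ne (by omega)
  · rename_i h
    split
    · rename_i h2
      exact iff_of_true rfl (by omega)
    · rename_i h2
      exact iff_of_false (Fin.castSucc_lt_last _).ne (by omega)

lemma count_castSucc (f : Fin (2*n) → Fin n) (p : Fin (2*n+1)) (k : Fin n) :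
    ((univ : Finset (Fin (2*(n+1)))).filter fun i => insF f p i = k.castSucc).card
      = ((univ : Finset (Fin (2*n))).filter fun j => f j = k).card := by
  symm
  apply Finset.card_bij (fun j _ => eIdx p j)
  · intro j hj
    simp only [mem_filter, mem_univ, true_and] at hj ⊢
    rw [insF_eIdx, hj]
  · intro a _ b _ h
    exact eIdx_inj p h
  · intro i hi
    simp only [mem_filter, mem_univ, true_and] at hi
    have key : ¬((i:ℕ) = (p:ℕ) ∨ (i:ℕ) = (p:ℕ)+1) := by
      intro h
      have h2 := (insF_eq_last_iff f p i).mpr h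
      rw [hi] at h2
      exact (Fin.castSucc_lt_last k).ne h2
    push_neg at key
    obtain ⟨j, hj⟩ := eIdx_surj p i key.1 key.2
    refine ⟨j, ?_, hj⟩
    simp only [mem_filter, mem_univ, true_and]
    have h3 := insF_eIdx f p j
    rw [hj, hi] at h3
    exact (Fin.castSucc_injective n h3).symm

lemma count_last (f : Fin (2*n) → Fin n) (p : Fin (2*n+1)) :
    ((univ : Finset (Fin (2*(n+1)))).filter fun i => insF f p i = Fin.last n).card = 2 := by
  have hp1 : ((p : ℕ) : ℕ) < 2*(n+1) := by have := p.isLt; omega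
  have hp2 : (p : ℕ) + 1 < 2*(n+1) := by have := p.isLt; omega
  have hset : ((univ : Finset (Fin (2*(n+1)))).filter fun i => insF f p i = Fin.last n)
      = {(⟨(p:ℕ), hp1⟩ : Fin (2*(n+1))), ⟨(p:ℕ)+1, hp2⟩} := by
    ext i
    simp only [mem_filter, mem_univ, true_and, mem_insert, mem_singleton]
    rw [insF_eq_last_iff]
    simp [Fin.ext_iff]
  rw [hset]
  rw [Finset.card_insert_of_notMem (by simp [Fin.ext_iff]), Finset.card_singleton]

lemma isStirling_insF {f : Fin (2*n) → Fin n} (hf : IsStirling n f) (p : Fin (2*n+1)) :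
    IsStirling (n+1) (insF f p) := by
  constructor
  · intro k
    rcases eq_or_ne k (Fin.last n) with rfl | hk
    · exact count_last f p
    · obtain ⟨k', rfl⟩ := Fin.exists_castSucc_eq.mpr hk
      rw [count_castSucc]
      exact hf.1 k'
  · intro a b c hab hbc habc
    by_cases hl : insF f p a = Fin.last n
    · have ha := (insF_eq_last_iff f p a).mp hl
      have hc := (insF_eq_last_iff f p c).mp (habc ▸ hl)
      rw [Fin.lt_def] at hab hbc
      omega
    · have hlc : ¬((c:ℕ) = (p:ℕ) ∨ (c:ℕ) = (p:ℕ)+1) := fun h =>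
        hl (habc.trans ((insF_eq_last_iff f p c).mpr h))
      rw [insF_eq_last_iff] at hl
      push_neg at hl hlc
      obtain ⟨ja, hja⟩ := eIdx_surj p a hl.1 hl.2
      obtain ⟨jc, hjc⟩ := eIdx_surj p c hlc.1 hlc.2
      have hval : f ja = f jc := by
        apply Fin.castSucc_injective
        rw [← insF_eIdx f p ja, ← insF_eIdx f p jc, hja, hjc]
        exact habc
      by_cases hbl : insF f p b = Fin.last n
      · rw [← hja, insF_eIdx, hbl]
        exact Fin.castSucc_lt_last _
      · rw [insF_eq_last_iff] at hbl
        push_neg at hbl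
        obtain ⟨jb, hjb⟩ := eIdx_surj p b hbl.1 hbl.2
        have h1 : ja < jb := (eIdx_lt_iff p).mp (by rw [hja, hjb]; exact hab)
        have h2 : jb < jc := (eIdx_lt_iff p).mp (by rw [hjb, hjc]; exact hbc)
        have h3 := hf.2 ja jb jc h1 h2 hval
        rw [← hja, ← hjb, insF_eIdx, insF_eIdx]
        exact Fin.castSucc_lt_castSucc_iff.mpr h3

lemma exists_insF_aux {g : Fin (2*(n+1)) → Fin (n+1)} (hg : IsStirling (n+1) g)
    (a b : Fin (2*(n+1))) (hab : a < b)
    (hchar : ∀ i, g i = Fin.last n ↔ i = a ∨ i = b) :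
    ∃ (f : Fin (2*n) → Fin n) (p : Fin (2*n+1)), IsStirling n f ∧ insF f p = g := by
  have hga : g a = Fin.last n := (hchar a).mpr (Or.inl rfl)
  have hgb : g b = Fin.last n := (hchar b).mpr (Or.inr rfl)
  have hba : (b : ℕ) = (a : ℕ) + 1 := by
    by_contra hne
    have hlt : (a : ℕ) + 1 < (b : ℕ) := by rw [Fin.lt_def] at hab; omega
    have hb2 : (a : ℕ) + 1 < 2*(n+1) := by have := b.isLt; omega
    have h1 : a < (⟨(a:ℕ)+1, hb2⟩ : Fin (2*(n+1))) := by rw [Fin.lt_def]; simp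
    have h2 : (⟨(a:ℕ)+1, hb2⟩ : Fin (2*(n+1))) < b := by rw [Fin.lt_def]; exact hlt
    have h3 := hg.2 a ⟨(a:ℕ)+1, hb2⟩ b h1 h2 (hga.trans hgb.symm)
    rw [hga] at h3
    exact absurd h3 (Fin.not_lt.mpr (Fin.le_last _))
  have hpb : (a : ℕ) < 2*n+1 := by have := b.isLt; omega
  set p : Fin (2*n+1) := ⟨(a:ℕ), hpb⟩ with hp
  have hpa : (p : ℕ) = (a : ℕ) := rfl
  have hchar' : ∀ i : Fin (2*(n+1)), g i = Fin.last n ↔ ((i:ℕ) = (p:ℕ) ∨ (i:ℕ) = (p:ℕ)+1) := by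
    intro i
    rw [hchar i]
    constructor
    · rintro (rfl | rfl)
      · exact Or.inl hpa.symm
      · exact Or.inr (by omega)
    · rintro (h | h)
      · exact Or.inl (Fin.ext (by omega))
      · exact Or.inr (Fin.ext (by omega))
  have hne : ∀ j : Fin (2*n), g (eIdx p j) ≠ Fin.last n := by
    intro j h
    rcases (hchar' _).mp h with h' | h'
    · exact (eIdx_ne p j).1 h'
    · exact (eIdx_ne p j).2 h'
  set f : Fin (2*n) → Fin n := fun j => (g (eIdx p j)).castPred (hne j) with hfdef
  have hfe : ∀ j, (f j).castSucc = g (eIdx p j) := fun j => Fin.castSucc_castPred _ _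
  have hstir : IsStirling n f := by
    constructor
    · intro k
      have h2 := hg.1 k.castSucc
      refine Eq.trans ?_ h2
      apply Finset.card_bij (fun j _ => eIdx p j)
      · intro j hj
        simp only [mem_filter, mem_univ, true_and] at hj ⊢
        rw [← hfe, hj]
      · intro x _ y _ h
        exact eIdx_inj p h
      · intro i hi
        simp only [mem_filter, mem_univ, true_and] at hi
        have key : ¬((i:ℕ) = (p:ℕ) ∨ (i:ℕ) = (p:ℕ)+1) := by
          intro h
          have h3 := (hchar' i).mpr h
          rw [hi] at h3
          exact (Fin.castSucc_lt_last k).ne h3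
        push_neg at key
        obtain ⟨j, hj⟩ := eIdx_surj p i key.1 key.2
        refine ⟨j, ?_, hj⟩
        simp only [mem_filter, mem_univ, true_and]
        apply Fin.castSucc_injective
        rw [hfe, hj, hi]
    · intro u v w huv hvw huw
      have h3 := hg.2 (eIdx p u) (eIdx p v) (eIdx p w)
        ((eIdx_lt_iff p).mpr huv) ((eIdx_lt_iff p).mpr hvw)
        (by rw [← hfe, ← hfe, huw])
      rw [← hfe u, ← hfe v] at h3
      exact Fin.castSucc_lt_castSucc_iff.mp h3
  refine ⟨f, p, hstir, ?_⟩
  funext i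
  by_cases hi : (i:ℕ) = (p:ℕ) ∨ (i:ℕ) = (p:ℕ)+1
  · rw [(insF_eq_last_iff f p i).mpr hi, ((hchar' i).mpr hi)]
  · push_neg at hi
    obtain ⟨j, hj⟩ := eIdx_surj p i hi.1 hi.2
    rw [← hj, insF_eIdx, hfe]

lemma exists_insF {g : Fin (2*(n+1)) → Fin (n+1)} (hg : IsStirling (n+1) g) :
    ∃ (f : Fin (2*n) → Fin n) (p : Fin (2*n+1)), IsStirling n f ∧ insF f p = g := by
  have h2 := hg.1 (Fin.last n)
  obtain ⟨x, y, hxy, hset⟩ := Finset.card_eq_two.mp h2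
  have hchar : ∀ i, g i = Fin.last n ↔ i = x ∨ i = y := by
    intro i
    have := Finset.ext_iff.mp hset i
    simpa [Finset.mem_filter, Finset.mem_insert, Finset.mem_singleton] using this
  rcases hxy.lt_or_gt with h | h
  · exact exists_insF_aux hg x y h hchar
  · exact exists_insF_aux hg y x h (fun i => (hchar i).trans or_comm)

lemma card_step (n : ℕ) :
    (stirlingFinset (n+1)).card = (2*n+1) * (stirlingFinset n).card := by
  have key : ((univ : Finset (Fin (2*n+1))) ×ˢ stirlingFinset n).card
      = (stirlingFinset (n+1)).card := by
    apply Finset.card_bij (fun x _ => insF x.2 x.1)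
    · intro x hx
      rw [Finset.mem_product] at hx
      have hx2 : IsStirling n x.2 := (Finset.mem_filter.mp hx.2).2
      exact Finset.mem_filter.mpr ⟨Finset.mem_univ _, isStirling_insF hx2 x.1⟩
    · intro x1 h1 x2 h2 heq
      have hp : x1.1 = x2.1 := by
        have hv1 : ((x1.1 : ℕ) : ℕ) < 2*(n+1) := by have := x1.1.isLt; omega
        have hv2 : ((x2.1 : ℕ) : ℕ) < 2*(n+1) := by have := x2.1.isLt; omega
        have A : insF x1.2 x1.1 ⟨(x1.1 : ℕ), hv1⟩ = Fin.last n :=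
          (insF_eq_last_iff _ _ _).mpr (Or.inl rfl)
        rw [heq] at A
        have A2 := (insF_eq_last_iff _ _ _).mp A
        have B : insF x2.2 x2.1 ⟨(x2.1 : ℕ), hv2⟩ = Fin.last n :=
          (insF_eq_last_iff _ _ _).mpr (Or.inl rfl)
        rw [← heq] at B
        have B2 := (insF_eq_last_iff _ _ _).mp B
        apply Fin.ext
        simp only [] at A2 B2
        omega
      have hf : x1.2 = x2.2 := by
        funext j
        apply Fin.castSucc_injective
        have h3 := congrFun heq (eIdx x1.1 j)
        rw [insF_eIdx, hp, insF_eIdx] at h3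
        exact h3
      exact Prod.ext hp hf
    · intro g hgm
      have hgm2 : IsStirling (n+1) g := (Finset.mem_filter.mp hgm).2
      obtain ⟨f, p, hf, hfp⟩ := exists_insF hgm2
      exact ⟨(p, f), Finset.mem_product.mpr
        ⟨Finset.mem_univ _, Finset.mem_filter.mpr ⟨Finset.mem_univ _, hf⟩⟩, hfp⟩
  rw [← key, Finset.card_product, Finset.card_univ, Fintype.card_fin]

lemma card_one : (stirlingFinset 1).card = 1 := by decide

end StirAux

/-- the number of Stirling permutations of order n is (2n-1)!!. -/
theorem stmt_7 (n : ℕ) (hn : 1 ≤ n) :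
    (stirlingFinset n).card = ∏ i ∈ Finset.Icc 1 n, (2 * i - 1) := by
  induction n, hn using Nat.le_induction with
  | base =>
    rw [Finset.Icc_self, Finset.prod_singleton]
    exact StirAux.card_one
  | succ n hn ih =>
    rw [StirAux.card_step, ih, Finset.prod_Icc_succ_top (by omega : 1 ≤ n + 1)]
    have h : 2 * (n + 1) - 1 = 2 * n + 1 := by omega
    rw [h, mul_comm]
end

section
/- For every integer n ≥ 1, the number of Stirling permutations of order n having no even indexed entries (i.e., with even(σ) = 0) equals n!. -/
open Finset

section Aux
variable {n : ℕ}

lemma three_preimages {f : Fin (2 * n) → Fin n}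
    (hf : ∀ k : Fin n, (univ.filter fun p => f p = k).card = 2)
    {a b c : Fin (2 * n)} (hab : a ≠ b) (hac : a ≠ c) (hbc : b ≠ c)
    (h1 : f a = f c) (h2 : f b = f c) : False := by
  have hsub : ({a, b, c} : Finset (Fin (2 * n))) ⊆ univ.filter (fun p => f p = f c) := by
    intro x hx
    simp only [mem_insert, mem_singleton] at hx
    rcases hx with rfl | rfl | rfl <;> simp [h1, h2]
  have hcard := Finset.card_le_card hsub
  rw [hf (f c)] at hcard
  have h3 : ({a, b, c} : Finset (Fin (2 * n))).card = 3 := by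
    rw [card_insert_of_notMem (by simp [hab, hac]),
      card_insert_of_notMem (by simp [hbc]), card_singleton]
  omega

lemma structure_lemma {f : Fin (2 * n) → Fin n}
    (hf : ∀ k : Fin n, (univ.filter fun p => f p = k).card = 2)
    (he : ∀ p : Fin (2 * n), (p : ℕ) % 2 = 1 → ∃ q, q < p ∧ f q = f p) :
    ∀ k (hk : k < 2 * n),
      ((k % 2 = 1 → f ⟨k, hk⟩ = f ⟨k - 1, by omega⟩) ∧
       (k % 2 = 0 → ∀ q : Fin (2 * n), (q : ℕ) < k → f q ≠ f ⟨k, hk⟩)) := by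
  intro k
  induction k using Nat.strong_induction_on with
  | _ k ih =>
    intro hk
    -- helper : for q with (q:ℕ) odd, f q = f (q-1)
    have hstep : ∀ q : Fin (2 * n), (q : ℕ) % 2 = 1 → (q : ℕ) < k →
        f q = f ⟨(q : ℕ) - 1, by have := q.2; omega⟩ := by
      intro q hodq hqk
      have h := (ih (q : ℕ) hqk q.2).1 hodq
      have hqq : (⟨(q : ℕ), q.2⟩ : Fin (2 * n)) = q := Fin.ext rfl
      rw [hqq] at h
      exact h
    constructor
    · intro hodd
      obtain ⟨q, hq, hfq⟩ := he ⟨k, hk⟩ hodd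
      have hqk : (q : ℕ) < k := hq
      by_contra hne
      have hqne : (q : ℕ) ≠ k - 1 := by
        intro hqe
        apply hne
        rw [← hfq]
        congr 1
        exact Fin.ext hqe
      rcases Nat.even_or_odd (q : ℕ) with hev | hod
      · have hev' : (q : ℕ) % 2 = 0 := Nat.even_iff.mp hev
        have hq1 : (q : ℕ) + 1 < 2 * n := by omega
        have hq1k : (q : ℕ) + 1 < k := by omega
        have hq1eq : f ⟨(q : ℕ) + 1, hq1⟩ = f q := by
          have h := hstep ⟨(q : ℕ) + 1, hq1⟩ (by simp; omega) (by simpa using hq1k)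
          simp only at h
          rw [h]
          exact congrArg f (Fin.ext (by simp))
        exact three_preimages hf (a := q) (b := ⟨(q : ℕ) + 1, hq1⟩) (c := ⟨k, hk⟩)
          (by intro h; have := Fin.val_eq_of_eq h; simp at this)
          (by intro h; have := Fin.val_eq_of_eq h; simp at this; omega)
          (by intro h; have := Fin.val_eq_of_eq h; simp at this; omega)
          hfq (by rw [hq1eq, hfq])
      · have hodq : (q : ℕ) % 2 = 1 := Nat.odd_iff.mp hod
        have hqm : (q : ℕ) - 1 < 2 * n := by omega
        have hprev : f q = f ⟨(q : ℕ) - 1, hqm⟩ := hstep q hodq hqk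
        exact three_preimages hf (a := ⟨(q : ℕ) - 1, hqm⟩) (b := q) (c := ⟨k, hk⟩)
          (by intro h; have := Fin.val_eq_of_eq h; simp at this; omega)
          (by intro h; have := Fin.val_eq_of_eq h; simp at this; omega)
          (by intro h; have := Fin.val_eq_of_eq h; simp at this; omega)
          (by rw [← hprev, hfq]) hfq
    · intro heven q hq hfq
      rcases Nat.even_or_odd (q : ℕ) with hev | hod
      · have hev' : (q : ℕ) % 2 = 0 := Nat.even_iff.mp hev
        have hq1 : (q : ℕ) + 1 < 2 * n := by omega
        have hq1k : (q : ℕ) + 1 < k := by omega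
        have hq1eq : f ⟨(q : ℕ) + 1, hq1⟩ = f q := by
          have h := hstep ⟨(q : ℕ) + 1, hq1⟩ (by simp; omega) (by simpa using hq1k)
          simp only at h
          rw [h]
          exact congrArg f (Fin.ext (by simp))
        exact three_preimages hf (a := q) (b := ⟨(q : ℕ) + 1, hq1⟩) (c := ⟨k, hk⟩)
          (by intro h; have := Fin.val_eq_of_eq h; simp at this)
          (by intro h; have := Fin.val_eq_of_eq h; simp at this; omega)
          (by intro h; have := Fin.val_eq_of_eq h; simp at this; omega)
          hfq (by rw [hq1eq, hfq])
      · have hodq : (q : ℕ) % 2 = 1 := Nat.odd_iff.mp hod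
        have hqm : (q : ℕ) - 1 < 2 * n := by omega
        have hprev : f q = f ⟨(q : ℕ) - 1, hqm⟩ := hstep q hodq hq
        exact three_preimages hf (a := ⟨(q : ℕ) - 1, hqm⟩) (b := q) (c := ⟨k, hk⟩)
          (by intro h; have := Fin.val_eq_of_eq h; simp at this; omega)
          (by intro h; have := Fin.val_eq_of_eq h; simp at this; omega)
          (by intro h; have := Fin.val_eq_of_eq h; simp at this; omega)
          (by rw [← hprev, hfq]) hfq

end Aux

section Main
open Finset

variable {n : ℕ}

def dbl (n : ℕ) (g : Equiv.Perm (Fin n)) : Fin (2 * n) → Fin n :=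
  fun p => g ⟨(p : ℕ) / 2, by have := p.2; omega⟩

lemma dbl_isStirling (g : Equiv.Perm (Fin n)) : IsStirling n (dbl n g) := by
  constructor
  · intro k
    set m : Fin n := g.symm k with hm
    have h2m : 2 * (m : ℕ) < 2 * n := by have := m.2; omega
    have h2m1 : 2 * (m : ℕ) + 1 < 2 * n := by have := m.2; omega
    have hset : (univ.filter fun p => dbl n g p = k)
        = {(⟨2 * (m : ℕ), h2m⟩ : Fin (2 * n)), ⟨2 * (m : ℕ) + 1, h2m1⟩} := by
      ext p
      simp only [mem_filter, mem_univ, true_and, mem_insert, mem_singleton]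
      constructor
      · intro hp
        have : (⟨(p : ℕ) / 2, by have := p.2; omega⟩ : Fin n) = m := by
          rw [hm, Equiv.eq_symm_apply]; exact hp
        have hval : (p : ℕ) / 2 = (m : ℕ) := by
          simpa using congrArg Fin.val this
        have := p.2
        rcases Nat.even_or_odd (p : ℕ) with he | ho
        · left; apply Fin.ext
          have := Nat.even_iff.mp he
          simp only; omega
        · right; apply Fin.ext
          have := Nat.odd_iff.mp ho
          simp only; omega
      · intro hp
        rcases hp with rfl | rfl
        · show g _ = k
          have : (⟨((⟨2 * (m : ℕ), h2m⟩ : Fin (2 * n)) : ℕ) / 2,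
              by simp only; omega⟩ : Fin n) = m := Fin.ext (by simp only; omega)
          rw [this, hm, Equiv.apply_symm_apply]
        · show g _ = k
          have : (⟨((⟨2 * (m : ℕ) + 1, h2m1⟩ : Fin (2 * n)) : ℕ) / 2,
              by simp only; omega⟩ : Fin n) = m := Fin.ext (by simp only; omega)
          rw [this, hm, Equiv.apply_symm_apply]
    rw [hset]
    rw [card_insert_of_notMem (by
      simp only [mem_singleton]
      intro h
      have := congrArg Fin.val h
      simp only at this
      omega), card_singleton]
  · intro p q r hpq hqr hpr
    exfalso
    have := g.injective hpr
    have hval := congrArg Fin.val this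
    simp only at hval
    have hp := p.2
    have hpq' : (p : ℕ) < (q : ℕ) := hpq
    have hqr' : (q : ℕ) < (r : ℕ) := hqr
    omega

lemma dbl_evenCount (g : Equiv.Perm (Fin n)) : evenCount (dbl n g) = 0 := by
  rw [evenCount, Finset.card_eq_zero, evenFilter, Finset.filter_eq_empty_iff]
  intro p _
  rintro ⟨hp, hall⟩
  have hp1 : (p : ℕ) - 1 < 2 * n := by have := p.2; omega
  have hlt : (⟨(p : ℕ) - 1, hp1⟩ : Fin (2 * n)) < p := by
    show (p : ℕ) - 1 < (p : ℕ); omega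
  apply hall ⟨(p : ℕ) - 1, hp1⟩ hlt
  show g _ = g _
  congr 1
  apply Fin.ext
  simp only
  omega

lemma dbl_inj (g1 g2 : Equiv.Perm (Fin n)) (h : dbl n g1 = dbl n g2) : g1 = g2 := by
  apply Equiv.ext
  intro i
  have h2i : 2 * (i : ℕ) < 2 * n := by have := i.2; omega
  have := congrFun h ⟨2 * (i : ℕ), h2i⟩
  have hi : (⟨((⟨2 * (i : ℕ), h2i⟩ : Fin (2 * n)) : ℕ) / 2,
      by simp only; omega⟩ : Fin n) = i := Fin.ext (by simp only; omega)
  rwa [dbl, dbl, hi] at this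

lemma dbl_surj (f : Fin (2 * n) → Fin n) (hst : IsStirling n f) (hec : evenCount f = 0) :
    ∃ g : Equiv.Perm (Fin n), dbl n g = f := by
  have hfilter : evenFilter f = ∅ := Finset.card_eq_zero.mp hec
  have he : ∀ p : Fin (2 * n), (p : ℕ) % 2 = 1 → ∃ q, q < p ∧ f q = f p := by
    intro p hp
    by_contra hcon
    push_neg at hcon
    have : p ∈ evenFilter f := by
      rw [evenFilter, mem_filter]
      exact ⟨mem_univ _, hp, hcon⟩
    rw [hfilter] at this
    exact absurd this (notMem_empty p)
  have S := structure_lemma hst.1 he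
  set g0 : Fin n → Fin n := fun i => f ⟨2 * (i : ℕ), by have := i.2; omega⟩ with hg0
  have hinj : Function.Injective g0 := by
    intro i j hij
    by_contra hne
    rcases lt_trichotomy i j with h | h | h
    · have h2j : 2 * (j : ℕ) < 2 * n := by have := j.2; omega
      exact (S (2 * (j : ℕ)) h2j).2 (by omega) ⟨2 * (i : ℕ), by have := i.2; omega⟩
        (by show 2 * (i : ℕ) < 2 * (j : ℕ); have : (i : ℕ) < (j : ℕ) := h; omega) hij
    · exact hne h
    · have h2i : 2 * (i : ℕ) < 2 * n := by have := i.2; omega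
      exact (S (2 * (i : ℕ)) h2i).2 (by omega) ⟨2 * (j : ℕ), by have := j.2; omega⟩
        (by show 2 * (j : ℕ) < 2 * (i : ℕ); have : (j : ℕ) < (i : ℕ) := h; omega) hij.symm
  have hbij : Function.Bijective g0 := Finite.injective_iff_bijective.mp hinj
  refine ⟨Equiv.ofBijective g0 hbij, ?_⟩
  funext p
  have hhalf : (p : ℕ) / 2 < n := by have := p.2; omega
  have hdbl : dbl n (Equiv.ofBijective g0 hbij) p = f ⟨2 * ((p : ℕ) / 2), by omega⟩ := rfl
  rw [hdbl]
  rcases Nat.even_or_odd (p : ℕ) with hev | hod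
  · have := Nat.even_iff.mp hev
    exact congrArg f (Fin.ext (by simp only; omega))
  · have hodd := Nat.odd_iff.mp hod
    have h1 := (S (p : ℕ) p.2).1 hodd
    have hpp : (⟨(p : ℕ), p.2⟩ : Fin (2 * n)) = p := Fin.ext rfl
    rw [hpp] at h1
    rw [h1]
    exact congrArg f (Fin.ext (by simp only; omega))

end Main

/-- the number of Stirling permutations of order n with no even indexed
entries is n!. -/
theorem stmt_8 (n : ℕ) (hn : 1 ≤ n) :
    ((stirlingFinset n).filter fun σ => evenCount σ = 0).card = n.factorial := by
  classical
  have key : (univ : Finset (Equiv.Perm (Fin n))).card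
      = ((stirlingFinset n).filter fun σ => evenCount σ = 0).card := by
    apply Finset.card_bij (fun g _ => dbl n g)
    · intro g _
      rw [Finset.mem_filter]
      refine ⟨?_, dbl_evenCount g⟩
      rw [stirlingFinset, Finset.mem_filter]
      exact ⟨Finset.mem_univ _, dbl_isStirling g⟩
    · intro g1 _ g2 _ hEq
      exact dbl_inj g1 g2 hEq
    · intro f hf
      rw [Finset.mem_filter] at hf
      obtain ⟨hst, hec⟩ := hf
      rw [stirlingFinset, Finset.mem_filter] at hst
      obtain ⟨g, hg⟩ := dbl_surj f hst.2 hec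
      exact ⟨g, Finset.mem_univ _, hg⟩
  rw [← key, Finset.card_univ, Fintype.card_perm, Fintype.card_fin]
end

section
/- For every integer n ≥ 1, the sum over all permutations π ∈ S_n of 2^{n − lrmin(π)} equals the double factorial (2n−1)!! = Π_{i=1}^{n} (2i−1). Equivalently, the number of marked permutations of {1,…,n} is (2n−1)!!. -/
open Finset

/-!
Write a permutation of `Fin (n + 1)` as a permutation of `Fin n` with the maximal letter `n`
inserted at one of the `n + 1` positions. The new letter is a left-to-right minimum exactly when it
is put in front, and it changes no other left-to-right minimum; hence weighting each permutation by
`a ^ lrmin * b ^ (n - lrmin)` multiplies the total weight by `a + n * b` at each step, and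
`a = 1`, `b = 2` gives `1 * 3 * ⋯ * (2n - 1)`. A permutation `π` admits `2 ^ (n - lrmin π)`
markings, one for each subset of the values that are not left-to-right minima.
-/

section LeftToRightMinima

variable {m n : ℕ}

@[simp]
lemma mem_lrminFilter {α : Type*} [LinearOrder α] {f : Fin m → α} {i : Fin m} :
    i ∈ lrminFilter f ↔ ∀ j, j < i → f i < f j := by
  simp [lrminFilter]

lemma lrminCount_le {α : Type*} [LinearOrder α] (f : Fin m → α) : lrminCount f ≤ m :=
  (card_filter_le _ _).trans_eq (card_fin m)

/-- `insertMax σ k` is the word of `σ` with the new maximal letter `n` inserted at position `k`. -/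
def insertMax (σ : Equiv.Perm (Fin n)) (k : Fin (n + 1)) : Equiv.Perm (Fin (n + 1)) :=
  (finSuccEquiv' k).trans (σ.optionCongr.trans (finSuccEquiv' (Fin.last n)).symm)

@[simp]
lemma insertMax_apply_self (σ : Equiv.Perm (Fin n)) (k : Fin (n + 1)) :
    insertMax σ k k = Fin.last n := by
  simp [insertMax, finSuccEquiv'_at]

@[simp]
lemma insertMax_apply_succAbove (σ : Equiv.Perm (Fin n)) (k : Fin (n + 1)) (j : Fin n) :
    insertMax σ k (k.succAbove j) = (σ j).castSucc := by
  simp [insertMax, finSuccEquiv'_succAbove, finSuccEquiv'_symm_some]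

lemma insertMax_injective :
    Function.Injective fun p : Equiv.Perm (Fin n) × Fin (n + 1) => insertMax p.1 p.2 := by
  rintro ⟨σ, k⟩ ⟨τ, l⟩ h
  simp only at h
  obtain rfl : k = l := (insertMax σ k).injective <| by
    rw [insertMax_apply_self, h, insertMax_apply_self]
  have hστ : σ = τ := Equiv.ext fun j => Fin.castSucc_injective n <| by
    rw [← insertMax_apply_succAbove σ k, h, insertMax_apply_succAbove]
  rw [hστ]

lemma insertMax_bijective :
    Function.Bijective fun p : Equiv.Perm (Fin n) × Fin (n + 1) => insertMax p.1 p.2 := by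
  refine (Fintype.bijective_iff_injective_and_card _).2 ⟨insertMax_injective, ?_⟩
  simp [Fintype.card_perm, Nat.factorial_succ, mul_comm]

lemma self_mem_lrminFilter_insertMax_iff (σ : Equiv.Perm (Fin n)) (k : Fin (n + 1)) :
    k ∈ lrminFilter (insertMax σ k) ↔ k = 0 := by
  rw [mem_lrminFilter]
  refine ⟨fun h => ?_, ?_⟩
  · by_contra hk
    have := h 0 (Fin.pos_of_ne_zero hk)
    rw [insertMax_apply_self] at this
    exact (Fin.le_last _).not_gt this
  · rintro rfl j hj
    exact absurd hj (Fin.not_lt_zero j)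

lemma succAbove_mem_lrminFilter_insertMax_iff (σ : Equiv.Perm (Fin n)) (k : Fin (n + 1))
    (j : Fin n) : k.succAbove j ∈ lrminFilter (insertMax σ k) ↔ j ∈ lrminFilter σ := by
  simp only [mem_lrminFilter, insertMax_apply_succAbove]
  constructor
  · intro h j' hj'
    simpa using h (k.succAbove j') (Fin.succAbove_lt_succAbove_iff.2 hj')
  · intro h i hi
    obtain rfl | ⟨j', rfl⟩ := Fin.eq_self_or_eq_succAbove k i
    · simp
    · simpa using h j' (Fin.succAbove_lt_succAbove_iff.1 hi)

lemma lrminCount_insertMax (σ : Equiv.Perm (Fin n)) (k : Fin (n + 1)) :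
    lrminCount (insertMax σ k) = lrminCount σ + if k = 0 then 1 else 0 := by
  have hcount {p : ℕ} (f : Fin p → Fin p) :
      lrminCount f = ∑ i, if i ∈ lrminFilter f then 1 else 0 := by
    rw [sum_ite_mem, univ_inter, ← card_eq_sum_ones, lrminCount]
  rw [hcount, hcount, Fin.sum_univ_succAbove _ k, add_comm]
  simp only [self_mem_lrminFilter_insertMax_iff, succAbove_mem_lrminFilter_insertMax_iff]

theorem sum_pow_lrminCount_mul_pow {R : Type*} [CommSemiring R] (a b : R) (n : ℕ) :
    ∑ π : Equiv.Perm (Fin n), a ^ lrminCount π * b ^ (n - lrminCount π) =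
      ∏ i ∈ range n, (a + i * b) := by
  induction n with
  | zero => simp [lrminCount, lrminFilter]
  | succ n ih =>
    rw [← Fintype.sum_bijective _ insertMax_bijective _ _ fun _ => rfl, Fintype.sum_prod_type,
      prod_range_succ, ← ih, sum_mul]
    refine sum_congr rfl fun σ _ => ?_
    have hle := lrminCount_le σ
    simp only [Fin.sum_univ_succ, lrminCount_insertMax, Fin.succ_ne_zero, if_true, if_false,
      add_zero, sum_const, card_univ, Fintype.card_fin, nsmul_eq_mul]
    rw [show n + 1 - (lrminCount σ + 1) = n - lrminCount σ by omega,
      show n + 1 - lrminCount σ = n - lrminCount σ + 1 by omega]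
    ring

lemma prod_range_two_mul_add_one (n : ℕ) :
    ∏ i ∈ range n, (2 * i + 1) = ∏ i ∈ Icc 1 n, (2 * i - 1) := by
  induction n with
  | zero => rfl
  | succ n ih => rw [prod_range_succ, ih, prod_Icc_succ_top (by omega)]; rfl

theorem sum_two_pow_sub_lrminCount (n : ℕ) :
    ∑ π : Equiv.Perm (Fin n), 2 ^ (n - lrminCount π) = ∏ i ∈ Icc 1 n, (2 * i - 1) := by
  have h := sum_pow_lrminCount_mul_pow (1 : ℕ) 2 n
  simp only [one_pow, one_mul, Nat.cast_id] at h
  rw [h, ← prod_range_two_mul_add_one]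
  exact prod_congr rfl fun i _ => by ring

lemma card_lrminSet (σ : Equiv.Perm (Fin n)) : (lrminSet σ).card = lrminCount σ :=
  card_image_of_injective _ σ.injective

theorem card_markedPerms (n : ℕ) :
    (markedPerms n).card = ∑ π : Equiv.Perm (Fin n), 2 ^ (n - lrminCount π) := by
  rw [markedPerms, card_filter, Fintype.sum_prod_type]
  refine sum_congr rfl fun σ _ => ?_
  calc _ = #(lrminSet σ)ᶜ.powerset := by
        rw [← card_filter]
        congr 1
        ext M
        simp [subset_iff]
    _ = _ := by rw [card_powerset, card_compl, Fintype.card_fin, card_lrminSet]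

end LeftToRightMinima

theorem stmt_10_general (n : ℕ) :
    (∑ π : Equiv.Perm (Fin n), 2 ^ (n - lrminCount ⇑π)
        = ∏ i ∈ Finset.Icc 1 n, (2 * i - 1)) ∧
      (markedPerms n).card = ∏ i ∈ Finset.Icc 1 n, (2 * i - 1) :=
  ⟨sum_two_pow_sub_lrminCount n, (card_markedPerms n).trans (sum_two_pow_sub_lrminCount n)⟩

/-- Σ_{π ∈ S_n} 2^{n - lrmin(π)} = (2n-1)!!; equivalently the number of
marked permutations of {1,…,n} is (2n-1)!!. -/
theorem stmt_10 (n : ℕ) (hn : 1 ≤ n) :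
    (∑ π : Equiv.Perm (Fin n), 2 ^ (n - lrminCount ⇑π)
        = ∏ i ∈ Finset.Icc 1 n, (2 * i - 1)) ∧
      (markedPerms n).card = ∏ i ∈ Finset.Icc 1 n, (2 * i - 1) :=
  stmt_10_general n
end
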